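/- arXiv:2006.07486 — 5 statements merged into one kernel-verified Lean document; each statement's English description precedes it below -/
import Mathlib

section
/- For all positive integers n, k, D, η, α such that k/(4·D·α·η) is an integer and n ≥ 3k·(k/(2·D·α·η))^D, there exists a k-edge-connected simple graph G on n vertices with diameter at most 2D+2 such that, for every collection T_1, …, T_{k/α} of k/α spanning trees of G in which every edge of G lies in at most η of the trees, at least one tree T_i has diameter at least (1/4)·(k/(2·D·α·η))^D. -/
/-
Split `Fin n` into `L = q ^ D` blocks of `B ≥ 3k` consecutive vertices (`q = k / (2Dαη)`), join
all pairs of vertices in equal or adjacent blocks, and add a `q`-ary hierarchy of shortcuts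
between block hubs: level `t` joins the hub of block `a q^t` to the hub of block `⌊a/q⌋ q^(t+1)`.
After deleting fewer than `k` edges, a vertex still has a neighbour in each adjacent block, so the
graph stays connected; every hub reaches hub `0` in `D` shortcut steps, so the diameter is at most
`2D + 2`.

For the lower bound, give an edge `uv` the excess `|φ u - φ v| - 1`, where `φ` is the block index.
A path from the first to the last block has length at least `L - 1` minus the excess of its edges,
so a spanning tree has diameter at least `L - 1` minus its total excess. Only shortcuts have
excess, at most `D (q - 1) q^D` in total, so with congestion `η` one of the `2Dηq` trees has excess
at most `(q - 1) q^D / (2q)`, which forces its diameter up to `q^D / 4`.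
-/

open SimpleGraph

/-- A simple graph `G` is `k`-edge-connected: it has at least two vertices and
deleting any set of fewer than `k` edges leaves it connected. -/
def IsKEdgeConnected {V : Type} (G : SimpleGraph V) (k : ℕ) : Prop :=
  2 ≤ Nat.card V ∧
    ∀ F : Set (Sym2 V), F.Finite → F ⊆ G.edgeSet → F.ncard < k →
      (G.deleteEdges F).Connected

/-- `T` is a spanning tree of `G`. -/
def IsSpanningTree {V : Type} (G T : SimpleGraph V) : Prop :=
  T ≤ G ∧ T.IsTree

open Finset

namespace SimpleGraph

variable {V : Type*}

section Walks

variable {G : SimpleGraph V}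

lemma exists_walk_length_le_of_eq_or_adj (f : ℕ → V) (m : ℕ)
    (h : ∀ t < m, f t = f (t + 1) ∨ G.Adj (f t) (f (t + 1))) :
    ∃ p : G.Walk (f 0) (f m), p.length ≤ m := by
  induction m with
  | zero => exact ⟨.nil, le_rfl⟩
  | succ m ih =>
    obtain ⟨p, hp⟩ := ih fun t ht => h t (by omega)
    rcases h m (by omega) with heq | hadj
    · exact ⟨p.copy rfl heq, by simp only [Walk.length_copy]; omega⟩
    · exact ⟨p.concat hadj, by simp only [Walk.length_concat]; omega⟩

lemma dist_le_two_mul_of_forall_walk (r : V) {R : ℕ} (h : ∀ u, ∃ p : G.Walk u r, p.length ≤ R)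
    (u v : V) : G.dist u v ≤ 2 * R := by
  obtain ⟨p, hp⟩ := h u
  obtain ⟨p', hp'⟩ := h v
  calc G.dist u v ≤ (p.append p'.reverse).length := dist_le _
    _ ≤ 2 * R := by simp only [Walk.length_append, Walk.length_reverse]; omega

lemma Walk.IsPath.sum_map_edges_le {M : Type*} [AddCommMonoid M] [PartialOrder M]
    [CanonicallyOrderedAdd M] [Fintype G.edgeSet] {u v : V} {p : G.Walk u v} (hp : p.IsPath)
    (w : Sym2 V → M) : (p.edges.map w).sum ≤ ∑ e ∈ G.edgeFinset, w e := by
  classical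
  rw [← List.sum_toFinset w hp.edges_nodup]
  exact sum_le_sum_of_subset fun e he =>
    mem_edgeFinset.mpr (p.edges_subset_edgeSet (List.mem_toFinset.mp he))

lemma sum_sum_edgeFinset_le_of_congestion {ι : Type*} [Fintype ι] [Fintype G.edgeSet]
    (T : ι → SimpleGraph V) [∀ i, Fintype (T i).edgeSet] (hT : ∀ i, T i ≤ G) {η : ℕ}
    (hη : ∀ e ∈ G.edgeSet, Nat.card {i // e ∈ (T i).edgeSet} ≤ η) (w : Sym2 V → ℕ) :
    ∑ i, ∑ e ∈ (T i).edgeFinset, w e ≤ η * ∑ e ∈ G.edgeFinset, w e := by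
  classical
  have hsplit : ∀ i, ∑ e ∈ (T i).edgeFinset, w e =
      ∑ e ∈ G.edgeFinset, if e ∈ (T i).edgeSet then w e else 0 := fun i => by
    rw [← sum_filter]
    congr 1
    ext e
    simp only [mem_edgeFinset, mem_filter, and_iff_right_of_imp (fun h => edgeSet_mono (hT i) h)]
  simp_rw [hsplit]
  rw [sum_comm, mul_sum]
  refine sum_le_sum fun e he => ?_
  rw [← sum_filter, sum_const, smul_eq_mul]
  refine Nat.mul_le_mul_right _ ?_
  have := hη e (mem_edgeFinset.mp he)
  rwa [Nat.card_eq_fintype_card, Fintype.card_subtype] at this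

end Walks

section Blocks

variable (φ : V → ℕ)

def blockGraph : SimpleGraph V where
  Adj u v := u ≠ v ∧ Nat.dist (φ u) (φ v) ≤ 1
  symm := ⟨fun _ _ h => ⟨h.1.symm, Nat.dist_comm .. ▸ h.2⟩⟩
  loopless := ⟨fun _ h => h.1 rfl⟩

def excess : Sym2 V → ℕ :=
  Sym2.lift ⟨fun u v => Nat.dist (φ u) (φ v) - 1, fun _ _ => congrArg (· - 1) (Nat.dist_comm ..)⟩

@[simp]
lemma excess_mk (u v : V) : excess φ s(u, v) = Nat.dist (φ u) (φ v) - 1 := rfl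

variable {φ}

lemma Walk.dist_le_length_add_sum_excess {G : SimpleGraph V} {x y : V} (p : G.Walk x y) :
    Nat.dist (φ x) (φ y) ≤ p.length + (p.edges.map (excess φ)).sum := by
  induction p with
  | nil => simp [Nat.dist_self]
  | @cons u v w _ p ih =>
    have := Nat.dist.triangle_inequality (φ u) (φ v) (φ w)
    simp only [Walk.length_cons, Walk.edges_cons, List.map_cons, List.sum_cons, excess_mk]
    omega

lemma Connected.dist_le_dist_add_sum_excess {G : SimpleGraph V} [Fintype G.edgeSet]
    (hG : G.Connected) (x y : V) :
    Nat.dist (φ x) (φ y) ≤ G.dist x y + ∑ e ∈ G.edgeFinset, excess φ e := by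
  obtain ⟨p, hp, hlen⟩ := hG.exists_path_of_dist x y
  calc Nat.dist (φ x) (φ y) ≤ p.length + (p.edges.map (excess φ)).sum :=
        p.dist_le_length_add_sum_excess
    _ ≤ G.dist x y + ∑ e ∈ G.edgeFinset, excess φ e :=
        hlen ▸ Nat.add_le_add_left (hp.sum_map_edges_le _) _

lemma exists_dist_sub_dist_le_of_congestion [Fintype V] {G : SimpleGraph V} [Fintype G.edgeSet]
    {ι : Type*} [Fintype ι] [Nonempty ι] (T : ι → SimpleGraph V)
    (hTG : ∀ i, T i ≤ G) (hT : ∀ i, (T i).Connected) {η : ℕ}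
    (hη : ∀ e ∈ G.edgeSet, Nat.card {i // e ∈ (T i).edgeSet} ≤ η) (x y : V) :
    ∃ i, Fintype.card ι * (Nat.dist (φ x) (φ y) - (T i).dist x y) ≤
      η * ∑ e ∈ G.edgeFinset, excess φ e := by
  classical
  obtain ⟨i, -, hi⟩ := exists_min_image univ (fun i => ∑ e ∈ (T i).edgeFinset, excess φ e)
    univ_nonempty
  refine ⟨i, le_trans ?_ (sum_sum_edgeFinset_le_of_congestion T hTG hη _)⟩
  calc Fintype.card ι * (Nat.dist (φ x) (φ y) - (T i).dist x y)
      ≤ Fintype.card ι * ∑ e ∈ (T i).edgeFinset, excess φ e := by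
        have := (hT i).dist_le_dist_add_sum_excess (φ := φ) x y
        gcongr
        omega
    _ ≤ ∑ j, ∑ e ∈ (T j).edgeFinset, excess φ e :=
        card_nsmul_le_sum _ _ _ fun j _ => hi j (mem_univ j)

lemma card_filter_mk_mem_le {F : Set (Sym2 V)} [DecidablePred (· ∈ F)] (hF : F.Finite)
    (s : Finset V) (a : V) :
    #{w ∈ s | s(a, w) ∈ F} ≤ F.ncard := by
  rw [← Set.ncard_coe_finset]
  exact Set.ncard_le_ncard_of_injOn (fun w => s(a, w)) (fun w hw => (mem_filter.mp hw).2)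
    (fun _ _ _ _ h => Sym2.congr_right.mp h) hF

lemma exists_mem_mk_notMem_mk_notMem {F : Set (Sym2 V)} (hF : F.Finite) {s : Finset V}
    (hs : 2 * F.ncard < #s) (a b : V) : ∃ w ∈ s, s(a, w) ∉ F ∧ s(b, w) ∉ F := by
  classical
  by_contra! h
  have hcover : s ⊆ {w ∈ s | s(a, w) ∈ F} ∪ {w ∈ s | s(b, w) ∈ F} := fun w hw => by
    by_cases haw : s(a, w) ∈ F
    · exact mem_union_left _ (mem_filter.mpr ⟨hw, haw⟩)
    · exact mem_union_right _ (mem_filter.mpr ⟨hw, h w hw haw⟩)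
  have := (card_le_card hcover).trans (card_union_le _ _)
  have := card_filter_mk_mem_le hF s a
  have := card_filter_mk_mem_le hF s b
  omega

lemma reachable_deleteEdges_blockGraph {F : Set (Sym2 V)} {u w : V} (hF : s(u, w) ∉ F)
    (h : Nat.dist (φ u) (φ w) ≤ 1) : ((blockGraph φ).deleteEdges F).Reachable u w := by
  by_cases huw : u = w
  · exact huw ▸ Reachable.refl u
  · exact Adj.reachable ((deleteEdges_adj ..).mpr ⟨⟨huw, h⟩, hF⟩)

lemma connected_deleteEdges_blockGraph [Fintype V] [Nonempty V] {k : ℕ}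
    (hfib : ∀ v, ∀ j ≤ φ v, 2 * k ≤ #{w | φ w = j}) {F : Set (Sym2 V)} (hF : F.Finite)
    (hFk : F.ncard < k) : ((blockGraph φ).deleteEdges F).Connected := by
  classical
  have hsmall : ∀ v, ∀ j ≤ φ v, 2 * F.ncard < #{w | φ w = j} := fun v j hj => by
    have := hfib v j hj; omega
  obtain ⟨v⟩ := ‹Nonempty V›
  obtain ⟨r, hr⟩ : ∃ r, φ r = 0 := by
    obtain ⟨r, hr⟩ := card_pos.mp ((Nat.zero_le _).trans_lt (hsmall v 0 (Nat.zero_le _)))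
    exact ⟨r, (mem_filter.mp hr).2⟩
  have hroot : ∀ j u, φ u = j → ((blockGraph φ).deleteEdges F).Reachable u r := by
    intro j
    induction j with
    | zero =>
      intro u hu
      obtain ⟨w, hw, huw, hrw⟩ := exists_mem_mk_notMem_mk_notMem hF (hsmall u 0 (Nat.zero_le _)) u r
      have hw0 : φ w = 0 := (mem_filter.mp hw).2
      exact (reachable_deleteEdges_blockGraph huw (by simp [hu, hw0])).trans
        (reachable_deleteEdges_blockGraph hrw (by simp [hr, hw0])).symm
    | succ j ih =>
      intro u hu
      obtain ⟨w, hw, huw, -⟩ := exists_mem_mk_notMem_mk_notMem hF (hsmall u j (by omega)) u u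
      have hwj : φ w = j := (mem_filter.mp hw).2
      exact (reachable_deleteEdges_blockGraph huw
        (by rw [hu, hwj, Nat.dist_eq_sub_of_le_right (by omega)]; omega)).trans (ih w hwj)
  exact ⟨fun u v => (hroot _ u rfl).trans (hroot _ v rfl).symm⟩

lemma sum_excess_le_of_le_sup_fromEdgeSet {G : SimpleGraph V} [Fintype G.edgeSet]
    [DecidableEq V] {S : Finset (Sym2 V)} (hG : G ≤ blockGraph φ ⊔ fromEdgeSet ↑S) :
    ∑ e ∈ G.edgeFinset, excess φ e ≤ ∑ e ∈ S, excess φ e := by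
  rw [← sum_filter_add_sum_filter_not _ (· ∈ S)]
  have hblock : ∑ e ∈ G.edgeFinset with e ∉ S, excess φ e = 0 := by
    refine sum_eq_zero fun e he => ?_
    obtain ⟨he, heS⟩ := mem_filter.mp he
    induction e using Sym2.ind with
    | _ u v =>
      rcases hG (mem_edgeFinset.mp he) with h | ⟨h, -⟩
      · exact Nat.sub_eq_zero_of_le h.2
      · exact absurd h heS
  rw [hblock, add_zero]
  exact sum_le_sum_of_subset fun e he => (mem_filter.mp he).2

end Blocks

/-- `a / q * q ^ (t + 1)` is `a * q ^ t` with its base-`q` digit of weight `q ^ t` cleared. -/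
def hierarchicalShortcuts [DecidableEq V] (q D : ℕ) (hub : ℕ → V) : Finset (Sym2 V) :=
  ((range D).sigma fun t => range (q ^ (D - t))).image
    fun x => s(hub (x.2 * q ^ x.1), hub (x.2 / q * q ^ (x.1 + 1)))

variable {q D : ℕ} {hub : ℕ → V}

lemma exists_walk_hierarchicalShortcuts [DecidableEq V] (hq : 0 < q) {j : ℕ} (hj : j < q ^ D) :
    ∃ p : (fromEdgeSet ↑(hierarchicalShortcuts q D hub)).Walk (hub j) (hub 0), p.length ≤ D := by
  have hchain := exists_walk_length_le_of_eq_or_adj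
    (G := fromEdgeSet ↑(hierarchicalShortcuts q D hub)) (fun t => hub (j / q ^ t * q ^ t)) D
    fun t ht => by
      by_cases heq : hub (j / q ^ t * q ^ t) = hub (j / q ^ (t + 1) * q ^ (t + 1))
      · exact .inl heq
      refine .inr ((fromEdgeSet_adj _).mpr ⟨mem_image.mpr ⟨⟨t, j / q ^ t⟩, ?_, ?_⟩, heq⟩)
      · refine mem_sigma.mpr ⟨mem_range.mpr ht, mem_range.mpr ?_⟩
        rw [Nat.div_lt_iff_lt_mul (by positivity), ← pow_add, Nat.sub_add_cancel ht.le]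
        exact hj
      · rw [Nat.div_div_eq_div_mul, ← pow_succ]
  rwa [pow_zero, Nat.div_one, mul_one, Nat.div_eq_of_lt hj, zero_mul] at hchain

lemma excess_hierarchicalShortcut_le {φ : V → ℕ} (hq : 0 < q)
    (hhub : ∀ j < q ^ D, φ (hub j) = j) {t a : ℕ} (ht : t < D) (ha : a < q ^ (D - t)) :
    excess φ s(hub (a * q ^ t), hub (a / q * q ^ (t + 1))) ≤ (q - 1) * q ^ t := by
  have hdigits : a * q ^ t = a / q * q ^ (t + 1) + a % q * q ^ t := by
    conv_lhs => rw [← Nat.div_add_mod a q]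
    ring
  have hlt : a * q ^ t < q ^ D := by
    calc a * q ^ t < q ^ (D - t) * q ^ t := Nat.mul_lt_mul_of_pos_right ha (by positivity)
      _ = q ^ D := by rw [← pow_add, Nat.sub_add_cancel ht.le]
  rw [excess_mk, hhub _ hlt, hhub _ (by omega), Nat.dist_comm, Nat.dist_eq_sub_of_le (by omega)]
  have : a % q ≤ q - 1 := by have := Nat.mod_lt a hq; omega
  have : a % q * q ^ t ≤ (q - 1) * q ^ t := Nat.mul_le_mul_right _ this
  omega

lemma sum_excess_hierarchicalShortcuts_le [DecidableEq V] {φ : V → ℕ} (hq : 0 < q)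
    (hhub : ∀ j < q ^ D, φ (hub j) = j) :
    ∑ e ∈ hierarchicalShortcuts q D hub, excess φ e ≤ D * ((q - 1) * q ^ D) := by
  refine (sum_image_le_of_nonneg fun _ _ => Nat.zero_le _).trans ?_
  rw [sum_sigma]
  refine (sum_le_card_nsmul _ _ ((q - 1) * q ^ D) fun t ht => ?_).trans
    (by rw [card_range, smul_eq_mul])
  refine (sum_le_card_nsmul _ _ ((q - 1) * q ^ t) fun a ha =>
    excess_hierarchicalShortcut_le hq hhub (mem_range.mp ht) (mem_range.mp ha)).trans ?_
  rw [card_range, smul_eq_mul, mul_left_comm, ← pow_add, Nat.sub_add_cancel (mem_range.mp ht).le]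

end SimpleGraph

section BlockPartition

variable {n : ℕ}

/-- `B` consecutive vertices per block, the remainder absorbed by the last block `L - 1`. -/
def blockIndex (B L : ℕ) (x : Fin n) : ℕ := min (x / B) (L - 1)

def blockHub (n B : ℕ) [NeZero n] (j : ℕ) : Fin n := Fin.ofNat n (j * B)

variable {B L : ℕ}

lemma blockIndex_lt (hL : 0 < L) (x : Fin n) : blockIndex B L x < L := by
  unfold blockIndex; omega

lemma blockIndex_of_lt {x : Fin n} {j : ℕ} (hj : j < L) (hx : j * B ≤ x) (hx' : x < j * B + B) :
    blockIndex B L x = j := by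
  have : (x : ℕ) / B = j := Nat.div_eq_of_lt_le hx (by rw [add_one_mul]; omega)
  unfold blockIndex; omega

lemma blockIndex_eq_sub_one (hB : 0 < B) {x : Fin n} (hx : (L - 1) * B ≤ x) :
    blockIndex B L x = L - 1 :=
  min_eq_right ((Nat.le_div_iff_mul_le hB).mpr hx)

lemma blockIndex_blockHub [NeZero n] (hB : 0 < B) (hLB : L * B ≤ n) {j : ℕ} (hj : j < L) :
    blockIndex B L (blockHub n B j) = j := by
  have hjB : j * B < n := (Nat.mul_lt_mul_of_pos_right hj hB).trans_le hLB
  apply blockIndex_of_lt hj <;> simp only [blockHub, Fin.val_ofNat, Nat.mod_eq_of_lt hjB] <;> omega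

lemma le_card_blockIndex_eq (hLB : L * B ≤ n) {j : ℕ} (hj : j < L) :
    B ≤ #{x : Fin n | blockIndex B L x = j} := by
  calc B = #(Ico (j * B) (j * B + B)) := by simp
    _ ≤ #((univ.filter fun x : Fin n => blockIndex B L x = j).map Fin.valEmbedding) :=
      card_le_card fun x hx => by
        obtain ⟨hx, hx'⟩ := mem_Ico.mp hx
        have hxn : x < n := hx'.trans_le ((add_one_mul j B ▸ Nat.mul_le_mul_right B hj).trans hLB)
        exact mem_map.mpr ⟨⟨x, hxn⟩, mem_filter.mpr ⟨mem_univ _, blockIndex_of_lt hj hx hx'⟩, rfl⟩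
    _ = #{x : Fin n | blockIndex B L x = j} := card_map _

end BlockPartition

lemma le_four_mul_of_two_mul_mul_sub_le {q L d : ℕ} (hq : 2 ≤ q) (hqL : q ≤ L)
    (h : 2 * q * (L - 1 - d) ≤ (q - 1) * L) : L ≤ 4 * d := by
  by_contra! hd
  zify [(by omega : 1 ≤ L), (by omega : d ≤ L - 1), (by omega : 1 ≤ q)] at h hd hq hqL
  nlinarith [mul_nonneg (by positivity : (0 : ℤ) ≤ q) (by omega : (0 : ℤ) ≤ L - 1 - 4 * d),
    mul_nonneg (by omega : (0 : ℤ) ≤ q - 2) (by omega : (0 : ℤ) ≤ L)]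

section HierarchicalBlockGraph

def hierarchicalBlockGraph (n q D B : ℕ) [NeZero n] : SimpleGraph (Fin n) :=
  blockGraph (blockIndex B (q ^ D)) ⊔ fromEdgeSet ↑(hierarchicalShortcuts q D (blockHub n B))

variable {n q D B : ℕ} [NeZero n]

lemma isKEdgeConnected_hierarchicalBlockGraph (hq : 0 < q) {k : ℕ} (hk : 0 < k) (hkB : 2 * k ≤ B)
    (hLB : q ^ D * B ≤ n) : IsKEdgeConnected (hierarchicalBlockGraph n q D B) k := by
  have hL : 0 < q ^ D := by positivity
  refine ⟨?_, fun F hF _ hFk => ?_⟩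
  · rw [Nat.card_fin]
    exact le_trans (by omega) ((Nat.le_mul_of_pos_left B hL).trans hLB)
  · refine (connected_deleteEdges_blockGraph (fun v j hj => ?_) hF hFk).mono
      (deleteEdges_mono le_sup_left)
    exact hkB.trans (le_card_blockIndex_eq hLB (hj.trans_lt (blockIndex_lt hL v)))

lemma dist_hierarchicalBlockGraph_le (hq : 0 < q) (hB : 0 < B) (hLB : q ^ D * B ≤ n)
    (u v : Fin n) : (hierarchicalBlockGraph n q D B).dist u v ≤ 2 * D + 2 := by
  refine (dist_le_two_mul_of_forall_walk (R := D + 1) (blockHub n B 0) (fun u => ?_) u v).trans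
    (by omega)
  have hj := blockIndex_lt (B := B) (L := q ^ D) (by positivity) u
  obtain ⟨p, hp⟩ := exists_walk_hierarchicalShortcuts (hub := blockHub n B) hq hj
  have hle : fromEdgeSet ↑(hierarchicalShortcuts q D (blockHub n B)) ≤
      hierarchicalBlockGraph n q D B := le_sup_right
  let p' := p.mapLe hle
  by_cases hu : u = blockHub n B (blockIndex B (q ^ D) u)
  · refine ⟨p'.copy hu.symm rfl, ?_⟩
    rw [Walk.length_copy, Walk.length_mapLe]
    omega
  · have hadj : (hierarchicalBlockGraph n q D B).Adj u (blockHub n B (blockIndex B (q ^ D) u)) :=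
      .inl ⟨hu, by rw [blockIndex_blockHub hB hLB hj, Nat.dist_self]; omega⟩
    refine ⟨.cons hadj p', ?_⟩
    rw [Walk.length_cons, Walk.length_mapLe]
    omega

lemma sum_excess_hierarchicalBlockGraph_le (hq : 0 < q) (hB : 0 < B) (hLB : q ^ D * B ≤ n)
    [Fintype (hierarchicalBlockGraph n q D B).edgeSet] :
    ∑ e ∈ (hierarchicalBlockGraph n q D B).edgeFinset, excess (blockIndex B (q ^ D)) e ≤
      D * ((q - 1) * q ^ D) :=
  (sum_excess_le_of_le_sup_fromEdgeSet (G := hierarchicalBlockGraph n q D B) le_rfl).trans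
    (sum_excess_hierarchicalShortcuts_le hq fun _ hj => blockIndex_blockHub hB hLB hj)

lemma exists_le_four_mul_dist_of_congestion (hq : 2 ≤ q) (hD : 0 < D) (hB : 0 < B)
    (hLB : q ^ D * B ≤ n) {η N : ℕ} (hη : 0 < η) (hN : N = 2 * D * η * q)
    (T : Fin N → SimpleGraph (Fin n))
    (hT : ∀ i, IsSpanningTree (hierarchicalBlockGraph n q D B) (T i))
    (hcong : ∀ e ∈ (hierarchicalBlockGraph n q D B).edgeSet,
      Nat.card {i // e ∈ (T i).edgeSet} ≤ η) :
    ∃ i, q ^ D ≤ 4 * (T i).dist 0 ⟨n - 1, Nat.sub_one_lt (NeZero.ne n)⟩ := by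
  classical
  have : Nonempty (Fin N) := ⟨⟨0, by rw [hN]; positivity⟩⟩
  obtain ⟨i, hi⟩ := exists_dist_sub_dist_le_of_congestion (φ := blockIndex B (q ^ D)) T
    (fun i => (hT i).1) (fun i => (hT i).2.connected) hcong 0 ⟨n - 1, Nat.sub_one_lt (NeZero.ne n)⟩
  have hlast : (q ^ D - 1) * B ≤ n - 1 := by
    have := Nat.sub_one_mul (q ^ D) B
    have := Nat.le_mul_of_pos_left B (show 0 < q ^ D by positivity)
    omega
  rw [Fintype.card_fin, hN, blockIndex_eq_sub_one (x := ⟨n - 1, _⟩) hB hlast,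
    show blockIndex B (q ^ D) (0 : Fin n) = 0 by simp [blockIndex], Nat.dist_zero_left] at hi
  refine ⟨i, le_four_mul_of_two_mul_mul_sub_le hq (Nat.le_self_pow hD.ne' q) ?_⟩
  refine Nat.le_of_mul_le_mul_left (?_ : D * η * _ ≤ D * η * _) (by positivity)
  calc D * η * (2 * q * (q ^ D - 1 - (T i).dist 0 ⟨n - 1, _⟩))
      = 2 * D * η * q * (q ^ D - 1 - (T i).dist 0 ⟨n - 1, _⟩) := by ring
    _ ≤ η * (D * ((q - 1) * q ^ D)) :=
        hi.trans (Nat.mul_le_mul_left η (sum_excess_hierarchicalBlockGraph_le (by omega) hB hLB))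
    _ = D * η * ((q - 1) * q ^ D) := by ring

end HierarchicalBlockGraph

theorem stmt_2 (n k D η α : ℕ) (hn : 0 < n) (hk : 0 < k) (hD : 0 < D)
    (hη : 0 < η) (hα : 0 < α)
    (hdvd : 4 * D * α * η ∣ k)
    (hbig : 3 * k * (k / (2 * D * α * η)) ^ D ≤ n) :
    ∃ G : SimpleGraph (Fin n),
      IsKEdgeConnected G k ∧
      (∀ u v : Fin n, G.dist u v ≤ 2 * D + 2) ∧
      ∀ T : Fin (k / α) → SimpleGraph (Fin n),
        (∀ i, IsSpanningTree G (T i)) →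
        (∀ e ∈ G.edgeSet, Nat.card {i : Fin (k / α) // e ∈ (T i).edgeSet} ≤ η) →
        ∃ (i : Fin (k / α)) (u v : Fin n),
          ((k / (2 * D * α * η) : ℕ) : ℝ) ^ D / 4 ≤ (T i).dist u v := by
  obtain ⟨m, hm⟩ := hdvd
  have hm0 : 0 < m := Nat.pos_of_ne_zero fun h => by simp [h] at hm; omega
  set q := 2 * m
  have hq : k / (2 * D * α * η) = q := by
    rw [hm, show 4 * D * α * η * m = 2 * D * α * η * q by ring,
      Nat.mul_div_cancel_left _ (by positivity)]
  have hN : k / α = 2 * D * η * q := by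
    rw [hm, show 4 * D * α * η * m = α * (2 * D * η * q) by ring, Nat.mul_div_cancel_left _ hα]
  rw [hq] at hbig ⊢
  have : NeZero n := ⟨hn.ne'⟩
  have hLB : q ^ D * (n / q ^ D) ≤ n := Nat.mul_div_le n _
  have hkB : 3 * k ≤ n / q ^ D := (Nat.le_div_iff_mul_le (by positivity)).mpr hbig
  refine ⟨hierarchicalBlockGraph n q D (n / q ^ D),
    isKEdgeConnected_hierarchicalBlockGraph (by omega) hk (by omega) hLB,
    dist_hierarchicalBlockGraph_le (by omega) (by omega) hLB, fun T hT hcong => ?_⟩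
  obtain ⟨i, hi⟩ :=
    exists_le_four_mul_dist_of_congestion (by omega) hD (by omega) hLB hη hN T hT hcong
  refine ⟨i, 0, ⟨n - 1, Nat.sub_one_lt (NeZero.ne n)⟩, (div_le_iff₀ four_pos).mpr ?_⟩
  exact_mod_cast hi.trans_eq (mul_comm _ _)
end

section
/- Let n, D be positive integers and let p be a real number with 0 < p < 1. Let V be a finite vertex set with |V| ≤ n, let H be a connected simple graph with vertex set V, and let T be a tree on V (a connected acyclic simple graph with vertex set V) having a root r such that every vertex of V is within T-distance D of r. Let R be the random spanning subgraph of T in which each edge of T is retained independently with probability p. Then, with probability at least 1 − D/n^{48}, the graph H ∪ R (the graph on V whose edge set is E(H) ∪ E(R)) has diameter at most (101·ln n / p)^D. -/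
/-!
Call `min (depth a) (depth b)` the depth of a tree edge `s(a, b)`, and let `G_k` be `H` plus the
retained tree edges of depth `≥ k`. Choose `s = ⌈49 ln n / p⌉` and radii `ρ₀ = 0`,
`ρ_{j+1} = s (2ρ_j + 1) + 1`. Going down from level `D`, every vertex is within `ρ_j` in
`G_{D-j}` of a vertex of depth `≤ D - j`: around a vertex `u`, either a vertex of smaller depth
is close, or there are `s` vertices of depth `d` close to `u`, and a retained parent edge of one of
them climbs a level. Which vertices these are depends only on the edges of depth `≥ d`, while
their parent edges have depth `d - 1`, so by independence all of them are missing with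
probability at most `(1 - p)^s ≤ n^(-49)`. A union bound over the `D` levels and the at most `n`
vertices gives failure probability `D / n^48`, and otherwise the diameter is at most
`2 ρ_D ≤ (101 ln n / p)^D`. When `(101 ln n / p)^D ≥ n - 1` there is nothing to prove, since
every distance in a connected graph on at most `n` vertices is below `n`; in the other case
`ln n ≥ 3`, which the numerical estimate of `ρ_D` needs.
-/

open Finset Real

section BernoulliWeight

variable {α : Type*}

def bernoulliWeight (p : ℝ) (A S : Finset α) : ℝ := p ^ #S * (1 - p) ^ (#A - #S)

variable {p : ℝ}

lemma bernoulliWeight_nonneg (hp0 : 0 ≤ p) (hp1 : p ≤ 1) (A S : Finset α) :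
    0 ≤ bernoulliWeight p A S := by
  unfold bernoulliWeight
  have : 0 ≤ 1 - p := by linarith
  positivity

lemma sum_bernoulliWeight (A : Finset α) : ∑ S ∈ A.powerset, bernoulliWeight p A S = 1 := by
  simp [bernoulliWeight, sum_pow_mul_eq_add_pow]

lemma one_sub_le_sum_filter_bernoulliWeight {ε : ℝ} {A : Finset α} {P : Finset α → Prop}
    [DecidablePred P] (h : ∑ S ∈ A.powerset with ¬ P S, bernoulliWeight p A S ≤ ε) :
    1 - ε ≤ ∑ S ∈ A.powerset with P S, bernoulliWeight p A S := by
  have := sum_filter_add_sum_filter_not A.powerset P (bernoulliWeight p A)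
  rw [sum_bernoulliWeight] at this
  linarith

variable [DecidableEq α]

lemma bernoulliWeight_union {A B S₁ S₂ : Finset α} (hAB : Disjoint A B) (h₁ : S₁ ⊆ A)
    (h₂ : S₂ ⊆ B) :
    bernoulliWeight p (A ∪ B) (S₁ ∪ S₂) = bernoulliWeight p A S₁ * bernoulliWeight p B S₂ := by
  have hS := card_union_of_disjoint (hAB.mono h₁ h₂)
  have hA := card_union_of_disjoint hAB
  have := card_le_card h₁
  have := card_le_card h₂
  rw [bernoulliWeight, bernoulliWeight, bernoulliWeight, hS, hA,
    show #A + #B - (#S₁ + #S₂) = (#A - #S₁) + (#B - #S₂) by omega, pow_add, pow_add]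
  ring

lemma sum_powerset_union {β : Type*} [AddCommMonoid β] {A B : Finset α} (hAB : Disjoint A B)
    (f : Finset α → β) :
    ∑ S ∈ (A ∪ B).powerset, f S = ∑ S₁ ∈ A.powerset, ∑ S₂ ∈ B.powerset, f (S₁ ∪ S₂) := by
  rw [← sum_product']
  have hsplit : ∀ S ⊆ A ∪ B, S ∩ A ∪ S ∩ B = S := fun S hS => by
    rw [← inter_union_distrib_left, inter_eq_left.2 hS]
  refine sum_nbij' (fun S => (S ∩ A, S ∩ B)) (fun S => S.1 ∪ S.2) ?_ ?_ ?_ ?_ ?_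
  · simp
  · simp only [mem_product, mem_powerset]
    exact fun S hS => union_subset_union hS.1 hS.2
  · simpa only [mem_powerset] using hsplit
  · simp only [mem_product, mem_powerset]
    intro S hS
    ext1
    · simp [union_inter_distrib_right, inter_eq_left.2 hS.1,
        disjoint_iff_inter_eq_empty.1 (hAB.mono_right hS.2).symm]
    · simp [union_inter_distrib_right, inter_eq_left.2 hS.2,
        disjoint_iff_inter_eq_empty.1 (hAB.mono_left hS.1)]
  · simp only [mem_powerset]
    exact fun S hS => by rw [hsplit S hS]

lemma sum_filter_disjoint_bernoulliWeight {A F : Finset α} (hF : F ⊆ A) :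
    ∑ S ∈ A.powerset with Disjoint F S, bernoulliWeight p A S = (1 - p) ^ #F := by
  have hA : F ∪ A \ F = A := union_sdiff_of_subset hF
  have hfilter : {S ∈ A.powerset | Disjoint F S} = (A \ F).powerset := by
    ext S
    simp [subset_sdiff, disjoint_comm]
  calc ∑ S ∈ A.powerset with Disjoint F S, bernoulliWeight p A S
      = ∑ S ∈ (A \ F).powerset, bernoulliWeight p F ∅ * bernoulliWeight p (A \ F) S := by
        rw [hfilter]
        refine sum_congr rfl fun S hS => ?_
        rw [← bernoulliWeight_union disjoint_sdiff (empty_subset F) (mem_powerset.1 hS),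
          empty_union, hA]
    _ = (1 - p) ^ #F := by
        rw [← mul_sum, sum_bernoulliWeight]
        simp [bernoulliWeight]

lemma sum_filter_bernoulliWeight_le_of_disjoint (hp0 : 0 ≤ p) (hp1 : p ≤ 1) {B F : Finset α}
    (hF : F ⊆ B) {s : ℕ} (E : Finset α → Prop) [DecidablePred E]
    (hE : ∀ S ⊆ B, E S → s ≤ #F ∧ Disjoint F S) :
    ∑ S ∈ B.powerset with E S, bernoulliWeight p B S ≤ (1 - p) ^ s := by
  by_cases hs : s ≤ #F
  · calc ∑ S ∈ B.powerset with E S, bernoulliWeight p B S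
        ≤ ∑ S ∈ B.powerset with Disjoint F S, bernoulliWeight p B S := by
          refine sum_le_sum_of_subset_of_nonneg ?_ fun S _ _ => bernoulliWeight_nonneg hp0 hp1 B S
          intro S hS
          rw [mem_filter, mem_powerset] at hS ⊢
          exact ⟨hS.1, (hE S hS.1 hS.2).2⟩
      _ = (1 - p) ^ #F := sum_filter_disjoint_bernoulliWeight hF
      _ ≤ (1 - p) ^ s := pow_le_pow_of_le_one (by linarith) (by linarith) hs
  · rw [filter_false_of_mem fun S hS hES => hs (hE S (mem_powerset.1 hS) hES).1, sum_empty]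
    exact pow_nonneg (by linarith) s

lemma sum_filter_bernoulliWeight_le_of_forced_absent (hp0 : 0 ≤ p) (hp1 : p ≤ 1)
    {A A₁ : Finset α} (hA₁ : A₁ ⊆ A) (F : Finset α → Finset α) (hF : ∀ S₁, F S₁ ⊆ A \ A₁)
    {s : ℕ} (E : Finset α → Prop) [DecidablePred E]
    (hE : ∀ S ⊆ A, E S → s ≤ #(F (S ∩ A₁)) ∧ Disjoint (F (S ∩ A₁)) S) :
    ∑ S ∈ A.powerset with E S, bernoulliWeight p A S ≤ (1 - p) ^ s := by
  have hA : A₁ ∪ A \ A₁ = A := union_sdiff_of_subset hA₁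
  calc ∑ S ∈ A.powerset with E S, bernoulliWeight p A S
      = ∑ S₁ ∈ A₁.powerset, bernoulliWeight p A₁ S₁ *
          ∑ S₂ ∈ (A \ A₁).powerset with E (S₁ ∪ S₂), bernoulliWeight p (A \ A₁) S₂ := by
        conv_lhs => rw [sum_filter, ← hA, sum_powerset_union disjoint_sdiff]
        refine sum_congr rfl fun S₁ hS₁ => ?_
        rw [sum_filter, mul_sum]
        refine sum_congr rfl fun S₂ hS₂ => ?_
        rw [bernoulliWeight_union disjoint_sdiff (mem_powerset.1 hS₁) (mem_powerset.1 hS₂)]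
        split_ifs <;> simp
    _ ≤ ∑ S₁ ∈ A₁.powerset, bernoulliWeight p A₁ S₁ * (1 - p) ^ s := by
        gcongr with S₁ hS₁
        · exact bernoulliWeight_nonneg hp0 hp1 A₁ S₁
        refine sum_filter_bernoulliWeight_le_of_disjoint hp0 hp1 (hF S₁) _ fun S₂ hS₂ hES => ?_
        have hS₁ := mem_powerset.1 hS₁
        have hcap : (S₁ ∪ S₂) ∩ A₁ = S₁ := by
          rw [union_inter_distrib_right, inter_eq_left.2 hS₁,
            disjoint_iff_inter_eq_empty.1 ((disjoint_sdiff_self_left).mono_left hS₂), union_empty]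
        have h := hE (S₁ ∪ S₂) (hA ▸ union_subset_union hS₁ hS₂) hES
        rw [hcap] at h
        exact ⟨h.1, h.2.mono_right subset_union_right⟩
    _ = (1 - p) ^ s := by rw [← sum_mul, sum_bernoulliWeight, one_mul]

end BernoulliWeight

lemma sum_filter_le_sum_sum_filter {β ι M : Type*} [AddCommMonoid M] [PartialOrder M]
    [IsOrderedAddMonoid M] {P : Finset β} {f : β → M} (hf : ∀ x ∈ P, 0 ≤ f x) {I : Finset ι}
    {R : β → Prop} [DecidablePred R] {Q : ι → β → Prop} [∀ i, DecidablePred (Q i)]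
    (h : ∀ x ∈ P, R x → ∃ i ∈ I, Q i x) :
    ∑ x ∈ P with R x, f x ≤ ∑ i ∈ I, ∑ x ∈ P with Q i x, f x := by
  calc ∑ x ∈ P with R x, f x
      ≤ ∑ x ∈ P with R x, ∑ i ∈ I with Q i x, f x := by
        refine sum_le_sum fun x hx => ?_
        obtain ⟨hxP, hxR⟩ := mem_filter.1 hx
        obtain ⟨i, hi, hQ⟩ := h x hxP hxR
        exact single_le_sum (f := fun _ => f x) (fun _ _ => hf x hxP) (mem_filter.2 ⟨hi, hQ⟩)
    _ ≤ ∑ x ∈ P, ∑ i ∈ I with Q i x, f x :=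
        sum_le_sum_of_subset_of_nonneg (filter_subset _ _) fun x hx _ =>
          sum_nonneg fun _ _ => hf x hx
    _ = ∑ i ∈ I, ∑ x ∈ P with Q i x, f x := sum_comm' (by simp; tauto)

def coverRadius (s : ℕ) : ℕ → ℕ
  | 0 => 0
  | j + 1 => s * (2 * coverRadius s j + 1) + 1

lemma coverRadius_closed (s j : ℕ) :
    (2 * s - 1 : ℝ) * coverRadius s j + (s + 1) = (s + 1) * (2 * s) ^ j := by
  induction j with
  | zero => simp [coverRadius]
  | succ j ih =>
    rw [coverRadius, pow_succ]
    push_cast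
    linear_combination (2 * (s : ℝ)) * ih

lemma two_mul_coverRadius_le {s D : ℕ} {L : ℝ} (hL : 3 ≤ L) (hs : 49 * L ≤ s)
    (hs' : s ≤ 49 * L + 1) (hD : D ≠ 0) : 2 * (coverRadius s D : ℝ) ≤ (101 * L) ^ D := by
  obtain ⟨D, rfl⟩ := Nat.exists_eq_succ_of_ne_zero hD
  have hclosed := coverRadius_closed s (D + 1)
  have hpow : (2 * s : ℝ) ^ D ≤ (101 * L) ^ D := pow_le_pow_left₀ (by positivity) (by linarith) D
  have hL101 : (0 : ℝ) ≤ (101 * L) ^ D := by positivity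
  have key : (2 * s - 1 : ℝ) * (2 * coverRadius s (D + 1)) ≤
      (2 * s - 1) * (101 * L) ^ (D + 1) :=
    calc (2 * s - 1 : ℝ) * (2 * coverRadius s (D + 1))
        ≤ 2 * (s + 1) * ((2 * s) * (2 * s) ^ D) := by rw [← pow_succ']; nlinarith
      _ ≤ 2 * (s + 1) * ((99 * L) * (101 * L) ^ D) :=
          mul_le_mul_of_nonneg_left (mul_le_mul (by linarith) hpow (by positivity) (by positivity))
            (by positivity)
      _ ≤ (2 * s - 1) * (101 * L) * (101 * L) ^ D := by
          rw [← mul_assoc]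
          exact mul_le_mul_of_nonneg_right (by nlinarith) hL101
      _ = (2 * s - 1) * (101 * L) ^ (D + 1) := by ring
  exact le_of_mul_le_mul_left key (by linarith)

lemma one_sub_pow_le_inv_pow {p x : ℝ} (hp1 : p ≤ 1) (hx : 0 < x) {k s : ℕ}
    (h : k * log x ≤ p * s) : (1 - p) ^ s ≤ (x ^ k)⁻¹ :=
  calc (1 - p) ^ s ≤ exp (-p) ^ s := pow_le_pow_left₀ (by linarith) (one_sub_le_exp_neg p) s
    _ = exp (-(p * s)) := by rw [← exp_nat_mul]; ring_nf
    _ ≤ exp (-(k * log x)) := exp_le_exp.2 (by linarith)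
    _ = (x ^ k)⁻¹ := by rw [exp_neg, exp_nat_mul, exp_log hx]

lemma three_le_log_of_lt {x : ℝ} (hx : 2 ≤ x) (h : 101 * log x < x - 1) : 3 ≤ log x := by
  have hlog2 : 0.69 < log x :=
    (by norm_num : (0.69 : ℝ) < 0.6931471803).trans
      (log_two_gt_d9.trans_le (log_le_log (by norm_num) hx))
  by_contra! h3
  have hexp3 : exp 3 < 21 := by
    have h := pow_lt_pow_left₀ exp_one_lt_d9 (exp_pos 1).le (by norm_num : (3 : ℕ) ≠ 0)
    rw [← exp_nat_mul] at h
    norm_num at h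
    linarith
  have : x < 21 := by
    rw [← exp_log (by positivity : 0 < x)]
    exact (exp_lt_exp.2 h3).trans hexp3
  linarith

lemma three_le_log_div_of_pow_lt {n D : ℕ} {p : ℝ} (hD : D ≠ 0) (hp0 : 0 < p) (hp1 : p ≤ 1)
    (h : (101 * log n / p) ^ D < n - 1) : 3 ≤ log n / p := by
  have hn : (2 : ℝ) ≤ n := by
    have : (1 : ℝ) < n := by linarith [pow_nonneg (by positivity : 0 ≤ 101 * log n / p) D]
    exact_mod_cast Nat.succ_le_of_lt (by exact_mod_cast this)
  have hK : 101 * log n ≤ 101 * log n / p := le_div_self (by positivity) hp0 hp1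
  have hsmall : 101 * log n < n - 1 := by
    rcases le_or_gt 1 (101 * log n / p) with hK1 | hK1
    · exact hK.trans_lt ((le_self_pow₀ hK1 hD).trans_lt h)
    · linarith
  exact (three_le_log_of_lt hn hsmall).trans (le_div_self (by positivity) hp0 hp1)

namespace SimpleGraph

section

variable {V : Type*} {G : SimpleGraph V} {u v : V}

lemma Walk.dist_getVert_of_length_eq_dist (p : G.Walk u v) (hp : p.length = G.dist u v)
    {t : ℕ} (ht : t ≤ p.length) : G.dist u (p.getVert t) = t := by
  rw [← length_eq_dist_of_subwalk hp (p.isSubwalk_take t), Walk.take_length]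
  omega

lemma Reachable.exists_dist_eq (h : G.Reachable u v) {t : ℕ} (ht : t ≤ G.dist u v) :
    ∃ w, G.dist u w = t := by
  obtain ⟨p, hp⟩ := h.exists_walk_length_eq_dist
  exact ⟨p.getVert t, p.dist_getVert_of_length_eq_dist hp (hp ▸ ht)⟩

lemma Reachable.exists_adj_dist_add_one (h : G.Reachable u v) (hne : G.dist u v ≠ 0) :
    ∃ x, G.Adj x v ∧ G.dist u x + 1 = G.dist u v := by
  obtain ⟨p, hp⟩ := h.exists_walk_length_eq_dist
  refine ⟨p.getVert (p.length - 1), ?_, ?_⟩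
  · simpa [Nat.sub_add_cancel (by omega : 1 ≤ p.length)] using
      p.adj_getVert_succ (i := p.length - 1) (by omega)
  · rw [p.dist_getVert_of_length_eq_dist hp (by omega)]
    omega

lemma Connected.dist_le_of_card_le [Fintype V] (hG : G.Connected) {n : ℕ}
    (hcard : Fintype.card V ≤ n) (u v : V) : (G.dist u v : ℝ) ≤ n - 1 := by
  obtain ⟨p, hp, hlen⟩ := hG.exists_path_of_dist u v
  have : G.dist u v + 1 ≤ n := hlen ▸ hp.length_lt.trans_le hcard
  have : (G.dist u v : ℝ) + 1 ≤ n := by exact_mod_cast this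
  linarith

/-- Ring the vertices at distances `i * (2ρ + 1) + ρ + 1`, `i < s`, from `u`: their `ρ`-close
level-`≤ d` vertices are `s` distinct vertices within `s * (2ρ + 1)` of `u`. If some ring is
empty, every vertex, in particular one of level `< d`, is that close to `u`. -/
lemma Connected.exists_near_lt_or_le_card_near_eq [Fintype V] (hG : G.Connected) (φ : V → ℕ)
    {d ρ : ℕ} (s : ℕ) (hcover : ∀ y, ∃ z, φ z ≤ d ∧ G.dist y z ≤ ρ) (hbelow : ∃ z, φ z < d)
    (u : V) :
    (∃ z, φ z < d ∧ G.dist u z ≤ s * (2 * ρ + 1)) ∨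
      s ≤ #{w | φ w = d ∧ G.dist u w ≤ s * (2 * ρ + 1)} := by
  by_cases hrings : ∀ i : Fin s, ∃ y, G.dist u y = i * (2 * ρ + 1) + ρ + 1
  · choose y hy using hrings
    choose z hzφ hzy using fun i => hcover (y i)
    have hz : ∀ i : Fin s,
        i * (2 * ρ + 1) + 1 ≤ G.dist u (z i) ∧ G.dist u (z i) ≤ (i + 1) * (2 * ρ + 1) := by
      intro i
      have h₁ : G.dist u (z i) ≤ G.dist u (y i) + G.dist (y i) (z i) := hG.dist_triangle
      have h₂ : G.dist u (y i) ≤ G.dist u (z i) + G.dist (z i) (y i) := hG.dist_triangle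
      rw [dist_comm (u := z i)] at h₂
      have := hy i
      have := hzy i
      constructor <;> nlinarith
    have hnear : ∀ i : Fin s, G.dist u (z i) ≤ s * (2 * ρ + 1) := fun i =>
      (hz i).2.trans (Nat.mul_le_mul_right _ i.2)
    by_cases hlow : ∃ i, φ (z i) < d
    · obtain ⟨i, hi⟩ := hlow
      exact Or.inl ⟨z i, hi, hnear i⟩
    push Not at hlow
    refine Or.inr ?_
    have hring : ∀ i : Fin s, (G.dist u (z i) - 1) / (2 * ρ + 1) = i := fun i =>
      Nat.div_eq_of_lt_le (by have := hz i; omega) (by have := hz i; omega)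
    calc s = #(univ : Finset (Fin s)) := by simp
      _ ≤ _ := card_le_card_of_injOn z
          (fun i _ => by simpa using ⟨le_antisymm (hzφ i) (hlow i), hnear i⟩)
          (fun i _ j _ hij => Fin.ext (by rw [← hring i, ← hring j, hij]))
  · push Not at hrings
    obtain ⟨i, hi⟩ := hrings
    obtain ⟨z₀, hz₀⟩ := hbelow
    have hfar : G.dist u z₀ < i * (2 * ρ + 1) + ρ + 1 := by
      by_contra! h
      obtain ⟨y, hy⟩ := (hG u z₀).exists_dist_eq h
      exact hi y hy
    have := Nat.mul_le_mul_right (2 * ρ + 1) (Nat.succ_le_of_lt i.2)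
    exact Or.inl ⟨z₀, hz₀, by rw [Nat.succ_mul] at this; omega⟩

end

section Levels

variable {V : Type*} (H T : SimpleGraph V) (r : V)

noncomputable def edgeDepth (e : Sym2 V) : ℕ :=
  Sym2.lift ⟨fun a b => min (T.dist r a) (T.dist r b), fun _ _ => min_comm _ _⟩ e

lemma edgeDepth_mk (a b : V) : edgeDepth T r s(a, b) = min (T.dist r a) (T.dist r b) := rfl

noncomputable def levelGraph (S : Finset (Sym2 V)) (k : ℕ) : SimpleGraph V :=
  H ⊔ fromEdgeSet {e | e ∈ S ∧ k ≤ edgeDepth T r e}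

def IsParentMap (par : V → V) : Prop :=
  ∀ w, T.dist r w ≠ 0 → T.Adj w (par w) ∧ T.dist r (par w) + 1 = T.dist r w

noncomputable def levelBall [Fintype V] (S : Finset (Sym2 V)) (d R : ℕ) (u : V) : Finset V :=
  {w | T.dist r w = d ∧ (levelGraph H T r S d).dist u w ≤ R}

def LevelBlocked [Fintype V] (par : V → V) (S : Finset (Sym2 V)) (s d R : ℕ) (u : V) : Prop :=
  s ≤ #(levelBall H T r S d R u) ∧ ∀ w ∈ levelBall H T r S d R u, s(w, par w) ∉ S

variable {H T r}

lemma levelGraph_anti (S : Finset (Sym2 V)) {k k' : ℕ} (h : k ≤ k') :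
    levelGraph H T r S k' ≤ levelGraph H T r S k :=
  sup_le_sup_left (fromEdgeSet_mono fun _ he => And.imp_right h.trans he) H

lemma levelGraph_zero (S : Finset (Sym2 V)) : levelGraph H T r S 0 = H ⊔ fromEdgeSet ↑S := by
  simp [levelGraph]

lemma levelGraph_congr {S S' : Finset (Sym2 V)} {k : ℕ}
    (h : ∀ e, k ≤ edgeDepth T r e → (e ∈ S ↔ e ∈ S')) :
    levelGraph H T r S k = levelGraph H T r S' k := by
  unfold levelGraph
  congr 2
  ext e
  exact and_congr_left (h e)

lemma levelGraph_connected (hH : H.Connected) (S : Finset (Sym2 V)) (k : ℕ) :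
    (levelGraph H T r S k).Connected :=
  hH.mono le_sup_left

lemma exists_isParentMap (hT : T.Connected) (r : V) : ∃ par, IsParentMap T r par := by
  have : ∀ w, ∃ x, T.dist r w ≠ 0 → T.Adj w x ∧ T.dist r x + 1 = T.dist r w := fun w => by
    by_cases hw : T.dist r w = 0
    · exact ⟨w, fun h => absurd hw h⟩
    · obtain ⟨x, hx, hxd⟩ := (hT r w).exists_adj_dist_add_one hw
      exact ⟨x, fun _ => ⟨hx.symm, hxd⟩⟩
  choose par hpar using this
  exact ⟨par, hpar⟩

lemma IsParentMap.edgeDepth_eq {par : V → V} (hpar : IsParentMap T r par) {w : V}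
    (hw : T.dist r w ≠ 0) : edgeDepth T r s(w, par w) + 1 = T.dist r w := by
  have := (hpar w hw).2
  rw [edgeDepth_mk]
  omega

lemma IsParentMap.injOn {par : V → V} (hpar : IsParentMap T r par) {d : ℕ} (hd : d ≠ 0) :
    Set.InjOn (fun w => s(w, par w)) {w | T.dist r w = d} := by
  intro w₁ hw₁ w₂ hw₂ h
  rcases Sym2.eq_iff.1 h with ⟨h₁, -⟩ | ⟨h₁, -⟩
  · exact h₁
  · have := (hpar w₂ (by simp_all)).2
    simp_all

end Levels

section Cover

variable {V : Type*} [Fintype V] {H T : SimpleGraph V} {r : V} {par : V → V}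

lemma levelGraph_cover_step (hH : H.Connected) (hpar : IsParentMap T r par)
    {S : Finset (Sym2 V)} {s d ρ : ℕ} (hd : d ≠ 0)
    (hcover : ∀ y, ∃ z, T.dist r z ≤ d ∧ (levelGraph H T r S d).dist y z ≤ ρ)
    (hfree : ∀ u, ¬ LevelBlocked H T r par S s d (s * (2 * ρ + 1)) u) (y : V) :
    ∃ z, T.dist r z ≤ d - 1 ∧ (levelGraph H T r S (d - 1)).dist y z ≤ s * (2 * ρ + 1) + 1 := by
  have hconn := levelGraph_connected (T := T) (r := r) hH S
  have hmono : ∀ z, (levelGraph H T r S (d - 1)).dist y z ≤ (levelGraph H T r S d).dist y z :=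
    fun z => ((hconn d) y z).dist_anti (levelGraph_anti S (Nat.sub_le d 1))
  rcases (hconn d).exists_near_lt_or_le_card_near_eq (T.dist r ·) s hcover
    ⟨r, by simpa using Nat.pos_of_ne_zero hd⟩ y with ⟨z, hz, hyz⟩ | hmany
  · exact ⟨z, by omega, (hmono z).trans (hyz.trans (Nat.le_succ _))⟩
  obtain ⟨w, hw, hwS⟩ : ∃ w ∈ levelBall H T r S d (s * (2 * ρ + 1)) y, s(w, par w) ∈ S := by
    by_contra! h
    exact hfree y ⟨hmany, h⟩
  obtain ⟨hwd, hyw⟩ : T.dist r w = d ∧ _ := by simpa [levelBall] using hw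
  have hdepth := (hpar w (hwd ▸ hd)).2
  have hadj : (levelGraph H T r S (d - 1)).Adj w (par w) :=
    Or.inr ⟨⟨hwS, by have := hpar.edgeDepth_eq (hwd ▸ hd); omega⟩, (hpar w (hwd ▸ hd)).1.ne⟩
  refine ⟨par w, by omega, ?_⟩
  calc (levelGraph H T r S (d - 1)).dist y (par w)
      ≤ (levelGraph H T r S (d - 1)).dist y w + (levelGraph H T r S (d - 1)).dist w (par w) :=
        (hconn _).dist_triangle
    _ ≤ s * (2 * ρ + 1) + 1 := add_le_add ((hmono w).trans hyw) (dist_eq_one_iff_adj.2 hadj).le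

lemma levelGraph_cover (hH : H.Connected) (hpar : IsParentMap T r par) {S : Finset (Sym2 V)}
    {s D : ℕ} (hdepth : ∀ v, T.dist r v ≤ D)
    (hfree : ∀ d ∈ Icc 1 D, ∀ u,
      ¬ LevelBlocked H T r par S s d (s * (2 * coverRadius s (D - d) + 1)) u) :
    ∀ j ≤ D, ∀ y, ∃ z, T.dist r z ≤ D - j ∧
      (levelGraph H T r S (D - j)).dist y z ≤ coverRadius s j := by
  intro j
  induction j with
  | zero => exact fun _ y => ⟨y, hdepth y, by simp [coverRadius]⟩
  | succ j ih =>
    intro hj y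
    have hfree' := hfree (D - j) (mem_Icc.2 ⟨by omega, by omega⟩)
    rw [Nat.sub_sub_self (by omega)] at hfree'
    rw [show D - (j + 1) = D - j - 1 by omega]
    exact levelGraph_cover_step hH hpar (by omega) (ih (by omega)) hfree' y

lemma dist_le_two_mul_coverRadius (hH : H.Connected) (hT : T.Connected)
    (hpar : IsParentMap T r par) {S : Finset (Sym2 V)} {s D : ℕ} (hdepth : ∀ v, T.dist r v ≤ D)
    (hfree : ∀ d ∈ Icc 1 D, ∀ u,
      ¬ LevelBlocked H T r par S s d (s * (2 * coverRadius s (D - d) + 1)) u)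
    (u v : V) : (H ⊔ fromEdgeSet ↑S).dist u v ≤ 2 * coverRadius s D := by
  have hroot : ∀ y, (H ⊔ fromEdgeSet ↑S).dist y r ≤ coverRadius s D := fun y => by
    obtain ⟨z, hz, hyz⟩ := levelGraph_cover hH hpar hdepth hfree D le_rfl y
    rw [Nat.sub_self, Nat.le_zero, (hT r z).dist_eq_zero_iff] at hz
    rwa [Nat.sub_self, levelGraph_zero, ← hz] at hyz
  have := (hH.mono le_sup_left : (H ⊔ fromEdgeSet ↑S).Connected).dist_triangle (u := u) (v := r)
    (w := v)
  rw [dist_comm (u := r)] at this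
  linarith [hroot u, hroot v]

end Cover

section Probability

variable {V : Type*} [Fintype V] [DecidableEq V] {H T : SimpleGraph V} [DecidableRel T.Adj]
  {r : V} {par : V → V} {p : ℝ}

open Classical in
/-- Whether `u` is blocked at level `d` depends only on the edges at depth `≥ d`, while it forces
`s` parent edges of depth `d - 1` to be missing. -/
lemma sum_levelBlocked_bernoulliWeight_le (hp0 : 0 ≤ p) (hp1 : p ≤ 1)
    (hpar : IsParentMap T r par) {d : ℕ} (hd : d ≠ 0) (s R : ℕ) (u : V) :
    ∑ S ∈ T.edgeFinset.powerset with LevelBlocked H T r par S s d R u,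
      bernoulliWeight p T.edgeFinset S ≤ (1 - p) ^ s := by
  have hball : ∀ S : Finset (Sym2 V), S ⊆ T.edgeFinset →
      levelBall H T r (S ∩ {e ∈ T.edgeFinset | d ≤ edgeDepth T r e}) d R u =
        levelBall H T r S d R u := fun S hS => by
    unfold levelBall
    rw [levelGraph_congr (S' := S) fun e he =>
      ⟨fun h => (mem_inter.1 h).1, fun h => mem_inter.2 ⟨h, mem_filter.2 ⟨hS h, he⟩⟩⟩]
  refine sum_filter_bernoulliWeight_le_of_forced_absent hp0 hp1
    (filter_subset (fun e => d ≤ edgeDepth T r e) T.edgeFinset)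
    (fun S₁ => (levelBall H T r S₁ d R u).image fun w => s(w, par w)) ?_
    (LevelBlocked H T r par · s d R u) ?_
  · intro S₁ e he
    obtain ⟨w, hw, rfl⟩ := mem_image.1 he
    have hwd : T.dist r w = d := (mem_filter.1 hw).2.1
    have := hpar.edgeDepth_eq (hwd ▸ hd)
    simp only [mem_sdiff, mem_edgeFinset, mem_edgeSet, mem_filter, not_and, not_le]
    exact ⟨(hpar w (hwd ▸ hd)).1, fun _ => by omega⟩
  · rintro S hS ⟨hcard, hmissing⟩
    rw [hball S hS]
    refine ⟨?_, Finset.disjoint_left.2 ?_⟩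
    · rwa [card_image_of_injOn fun w₁ hw₁ w₂ hw₂ =>
        hpar.injOn hd (mem_filter.1 hw₁).2.1 (mem_filter.1 hw₂).2.1]
    · intro e he
      obtain ⟨w, hw, rfl⟩ := mem_image.1 he
      exact hmissing w hw

lemma sum_not_dist_le_bernoulliWeight_le (hH : H.Connected) (hT : T.Connected) {D : ℕ}
    (hdepth : ∀ v, T.dist r v ≤ D) (hp0 : 0 ≤ p) (hp1 : p ≤ 1) (s : ℕ) :
    ∑ S ∈ T.edgeFinset.powerset with
        ¬ ∀ u v, (H ⊔ fromEdgeSet ↑(S : Finset (Sym2 V))).dist u v ≤ 2 * coverRadius s D,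
      bernoulliWeight p T.edgeFinset S ≤ D * Fintype.card V * (1 - p) ^ s := by
  classical
  obtain ⟨par, hpar⟩ := exists_isParentMap hT r
  calc _ ≤ ∑ i ∈ Icc 1 D ×ˢ (univ : Finset V),
        ∑ S ∈ T.edgeFinset.powerset with
          LevelBlocked H T r par S s i.1 (s * (2 * coverRadius s (D - i.1) + 1)) i.2,
          bernoulliWeight p T.edgeFinset S := by
        refine sum_filter_le_sum_sum_filter (fun S _ => bernoulliWeight_nonneg hp0 hp1 _ S)
          fun S _ hfar => ?_
        by_contra! h
        exact hfar (dist_le_two_mul_coverRadius hH hT hpar hdepth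
          fun d hd u => h (d, u) (mem_product.2 ⟨hd, mem_univ u⟩))
    _ ≤ ∑ i ∈ Icc 1 D ×ˢ (univ : Finset V), (1 - p) ^ s :=
        sum_le_sum fun i hi => sum_levelBlocked_bernoulliWeight_le hp0 hp1 hpar
          (by have := (mem_Icc.1 (mem_product.1 hi).1).1; omega) _ _ _
    _ = D * Fintype.card V * (1 - p) ^ s := by simp [card_product]


lemma sum_not_dist_le_bernoulliWeight_le_div (hH : H.Connected) (hT : T.Connected) {n D : ℕ}
    (hcard : Fintype.card V ≤ n) (hD : D ≠ 0) (hdepth : ∀ v, T.dist r v ≤ D) (hp0 : 0 < p)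
    (hp1 : p ≤ 1) (hL : 3 ≤ log n / p) :
    ∑ S ∈ T.edgeFinset.powerset with
        ¬ ∀ u v, ((H ⊔ fromEdgeSet ↑(S : Finset (Sym2 V))).dist u v : ℝ) ≤ (101 * log n / p) ^ D,
      bernoulliWeight p T.edgeFinset S ≤ D / n ^ 48 := by
  have hn : (0 : ℝ) < n := by
    rcases Nat.eq_zero_or_pos n with rfl | hn
    · norm_num at hL
    · exact_mod_cast hn
  set s := ⌈49 * (log n / p)⌉₊
  have hs : 49 * (log n / p) ≤ s := Nat.le_ceil _
  have hslog : 49 * log n ≤ p * s := by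
    rw [mul_div_assoc', div_le_iff₀ hp0] at hs
    linarith
  calc _ ≤ ∑ S ∈ T.edgeFinset.powerset with
        ¬ ∀ u v, (H ⊔ fromEdgeSet ↑(S : Finset (Sym2 V))).dist u v ≤ 2 * coverRadius s D,
        bernoulliWeight p T.edgeFinset S := by
        refine sum_le_sum_of_subset_of_nonneg (monotone_filter_right _ fun S _ hfar hnear => ?_)
          fun S _ _ => bernoulliWeight_nonneg hp0.le hp1 _ S
        refine hfar fun u v => ?_
        calc ((H ⊔ fromEdgeSet ↑S).dist u v : ℝ) ≤ 2 * coverRadius s D := by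
              exact_mod_cast hnear u v
          _ ≤ (101 * (log n / p)) ^ D :=
              two_mul_coverRadius_le hL hs (Nat.ceil_lt_add_one (by positivity)).le hD
          _ = (101 * log n / p) ^ D := by rw [mul_div_assoc]
    _ ≤ D * Fintype.card V * (1 - p) ^ s :=
        sum_not_dist_le_bernoulliWeight_le hH hT hdepth hp0.le hp1 s
    _ ≤ D * n * ((n : ℝ) ^ 49)⁻¹ := by
        gcongr
        exact one_sub_pow_le_inv_pow hp1 hn (by exact_mod_cast hslog)
    _ = D / n ^ 48 := by field_simp

end Probability

end SimpleGraph

open SimpleGraph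

theorem stmt_6_general (n D : ℕ) (hD : 0 < D)
    (p : ℝ) (hp0 : 0 < p) (hp1 : p < 1)
    (V : Type) [Fintype V] [DecidableEq V] (hcard : Fintype.card V ≤ n)
    (H : SimpleGraph V) (hH : H.Connected)
    (T : SimpleGraph V) [DecidableRel T.Adj] (r : V)
    (hT : T.IsTree) (hdepth : ∀ v : V, T.dist r v ≤ D) :
    1 - (D : ℝ) / (n : ℝ) ^ 48 ≤
      ∑ S ∈ T.edgeFinset.powerset,
        Set.indicator
          {S' : Finset (Sym2 V) |
            ∀ u v : V,
              ((H ⊔ SimpleGraph.fromEdgeSet (↑S' : Set (Sym2 V))).dist u v : ℝ) ≤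
                (101 * Real.log n / p) ^ D}
          (fun S' => p ^ S'.card * (1 - p) ^ (T.edgeFinset.card - S'.card)) S := by
  rw [sum_indicator_eq_sum_filter]
  refine one_sub_le_sum_filter_bernoulliWeight ?_
  by_cases hK : (n : ℝ) - 1 ≤ (101 * log n / p) ^ D
  · rw [filter_false_of_mem, sum_empty]
    · positivity
    exact fun S _ hS => hS fun u v => ((hH.mono le_sup_left).dist_le_of_card_le hcard u v).trans hK
  push Not at hK
  exact sum_not_dist_le_bernoulliWeight_le_div hH hT.connected hcard hD.ne' hdepth hp0 hp1.le
    (three_le_log_div_of_pow_lt hD.ne' hp0 hp1.le hK)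

theorem stmt_6 (n D : ℕ) (hn : 0 < n) (hD : 0 < D)
    (p : ℝ) (hp0 : 0 < p) (hp1 : p < 1)
    (V : Type) [Fintype V] [DecidableEq V] (hcard : Fintype.card V ≤ n)
    (H : SimpleGraph V) (hH : H.Connected)
    (T : SimpleGraph V) [DecidableRel T.Adj] (r : V)
    (hT : T.IsTree) (hdepth : ∀ v : V, T.dist r v ≤ D) :
    1 - (D : ℝ) / (n : ℝ) ^ 48 ≤
      ∑ S ∈ T.edgeFinset.powerset,
        Set.indicator
          {S' : Finset (Sym2 V) |
            ∀ u v : V,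
              ((H ⊔ SimpleGraph.fromEdgeSet (↑S' : Set (Sym2 V))).dist u v : ℝ) ≤
                (101 * Real.log n / p) ^ D}
          (fun S' => p ^ S'.card * (1 - p) ^ (T.edgeFinset.card - S'.card)) S :=
  stmt_6_general n D hD p hp0 hp1 V hcard H hH T r hT hdepth
end

section
/- Let k, n be positive integers and let G be a k-edge-connected simple graph on n vertices. Let S be a nonempty subset of V(G) such that the induced subgraph G[S] is connected, and let G_S be the subgraph of G whose vertex set consists of S together with all vertices of G having a neighbor in S, and whose edge set consists of all edges of G with both endpoints in S together with all edges of G with exactly one endpoint in S. Then G_S is connected and its diameter is at most 12n/k. -/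
open SimpleGraph

/-- The subgraph `G_S` of `G`: its vertices are `S` together with all vertices having a
neighbor in `S`, and its edges are all edges of `G` with at least one endpoint in `S`. -/
def nbhdSubgraph {V : Type} (G : SimpleGraph V) (S : Set V) : G.Subgraph where
  verts := S ∪ {v | ∃ u ∈ S, G.Adj u v}
  Adj a b := G.Adj a b ∧ (a ∈ S ∨ b ∈ S)
  adj_sub h := h.1
  edge_vert := by
    rintro a b ⟨hab, ha | hb⟩
    · exact Or.inl ha
    · exact Or.inr ⟨b, hb, hab.symm⟩
  symm := ⟨fun a b h => ⟨h.1.symm, h.2.symm⟩⟩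

/-! Every edge of `G_S` has an endpoint in `S`, so along a shortest path of length `d` in `G_S`
one of the positions `4i`, `4i + 1` carries a vertex of `S`; this gives `⌈d / 4⌉` vertices of `S`
pairwise at distance at least `3` in `G_S`. Their closed neighbourhoods in `G` lie in `G_S`, so a
common vertex would join two of them by a path of length `2`: these neighbourhoods are pairwise
disjoint. Each has at least `k + 1` vertices, since deleting the edges at a vertex of degree `< k`
would isolate it. Hence `⌈d / 4⌉ (k + 1) ≤ n`, i.e. `d ≤ 4n / (k + 1) ≤ 12n / k`. -/

namespace SimpleGraph

variable {V : Type*} {G : SimpleGraph V}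

lemma Walk.dist_getVert_eq_of_length_eq_dist {u v : V} (p : G.Walk u v)
    (hp : p.length = G.dist u v) {i j : ℕ} (hij : i ≤ j) (hj : j ≤ p.length) :
    G.dist (p.getVert i) (p.getVert j) = j - i := by
  have hsub : ((p.drop i).take (j - i)).IsSubwalk p :=
    ((p.drop i).isSubwalk_take _).trans (p.isSubwalk_drop i)
  have hlen := length_eq_dist_of_subwalk hp hsub
  rw [take_length, drop_length, drop_getVert, Nat.add_sub_cancel' hij] at hlen
  omega

lemma card_mul_succ_le_card_of_pairwiseDisjoint [Fintype V] [DecidableEq V] [DecidableRel G.Adj]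
    {ι : Type*} {s : Finset ι} {δ : ℕ} (x : ι → V) (hδ : ∀ i ∈ s, δ ≤ G.degree (x i))
    (hdisj : (s : Set ι).PairwiseDisjoint fun i => insert (x i) (G.neighborFinset (x i))) :
    s.card * (δ + 1) ≤ Fintype.card V := by
  calc s.card * (δ + 1) = ∑ _i ∈ s, (δ + 1) := by rw [Finset.sum_const, smul_eq_mul]
    _ ≤ ∑ i ∈ s, (insert (x i) (G.neighborFinset (x i))).card := by
      refine Finset.sum_le_sum fun i hi => ?_
      rw [Finset.card_insert_of_notMem (by simp), card_neighborFinset_eq_degree]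
      exact Nat.succ_le_succ (hδ i hi)
    _ = (s.biUnion fun i => insert (x i) (G.neighborFinset (x i))).card :=
      (Finset.card_biUnion hdisj).symm
    _ ≤ Fintype.card V := Finset.card_le_univ _

end SimpleGraph

open SimpleGraph

lemma IsKEdgeConnected.le_degree {V : Type} [Fintype V] {G : SimpleGraph V} [DecidableRel G.Adj]
    {k : ℕ} (hG : IsKEdgeConnected G k) (v : V) : k ≤ G.degree v := by
  classical
  by_contra! hlt
  have hncard : (G.incidenceSet v).ncard = G.degree v := by
    rw [Set.ncard_eq_toFinset_card', Set.toFinset_card, card_incidenceSet_eq_degree]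
  have hconn := hG.2 _ (Set.toFinite _) (fun _ he => he.1) (hncard ▸ hlt)
  obtain ⟨u, hu⟩ := Fintype.exists_ne_of_one_lt_card (Nat.card_eq_fintype_card (α := V) ▸ hG.1) v
  obtain ⟨_ | ⟨hadj, _⟩⟩ := hconn.preconnected v u
  · exact hu rfl
  · rw [deleteEdges_adj] at hadj
    exact hadj.2 ⟨hadj.1, Sym2.mem_mk_left _ _⟩

section nbhdSubgraph

variable {V : Type} {G : SimpleGraph V} {S : Set V}

lemma nbhdSubgraph_connected (hS : (G.induce S).Connected) : (nbhdSubgraph G S).Connected := by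
  set H := nbhdSubgraph G S
  let f : G.induce S →g H.coe := ⟨fun a => ⟨a, Or.inl a.2⟩, fun {a _} h => ⟨h, Or.inl a.2⟩⟩
  have reachable_of_S : ∀ x : H.verts, ∃ a : S, H.coe.Reachable (f a) x := by
    rintro ⟨x, hx | ⟨a, ha, hax⟩⟩
    · exact ⟨⟨x, hx⟩, .rfl⟩
    · exact ⟨⟨a, ha⟩, Adj.reachable (G := H.coe) ⟨hax, Or.inl ha⟩⟩
  have : Nonempty H.verts := hS.nonempty.map f
  rw [Subgraph.connected_iff']
  refine ⟨fun x y => ?_⟩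
  obtain ⟨a, hax⟩ := reachable_of_S x
  obtain ⟨b, hby⟩ := reachable_of_S y
  exact hax.symm.trans (((hS.preconnected a b).map f).trans hby)

lemma nbhdSubgraph_coe_edist_le_one {x : (nbhdSubgraph G S).verts} (hx : (x : V) ∈ S) {y : V}
    (hy : y = x ∨ G.Adj x y) :
    ∃ hy' : y ∈ (nbhdSubgraph G S).verts, (nbhdSubgraph G S).coe.edist x ⟨y, hy'⟩ ≤ 1 := by
  rcases hy with rfl | hxy
  · exact ⟨x.2, by simp⟩
  · exact ⟨Or.inr ⟨x, hx, hxy⟩, edist_le_one_iff_adj_or_eq.mpr (Or.inl ⟨hxy, Or.inl hx⟩)⟩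

lemma nbhdSubgraph_coe_dist_le_two {x y : (nbhdSubgraph G S).verts} (hx : (x : V) ∈ S)
    (hy : (y : V) ∈ S) {z : V} (hzx : z = x ∨ G.Adj x z) (hzy : z = y ∨ G.Adj y z) :
    (nbhdSubgraph G S).coe.dist x y ≤ 2 := by
  obtain ⟨hz, hxz⟩ := nbhdSubgraph_coe_edist_le_one hx hzx
  obtain ⟨_, hyz⟩ := nbhdSubgraph_coe_edist_le_one hy hzy
  have : (nbhdSubgraph G S).coe.edist x y ≤ 2 :=
    calc _ ≤ (nbhdSubgraph G S).coe.edist x ⟨z, hz⟩ + (nbhdSubgraph G S).coe.edist ⟨z, hz⟩ y :=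
          SimpleGraph.edist_triangle
      _ ≤ 1 + 1 := add_le_add hxz (SimpleGraph.edist_comm.trans_le hyz)
      _ = 2 := rfl
  exact ENat.toNat_le_toNat this (by decide)

lemma nbhdSubgraph_coe_dist_mul_le [Fintype V] [DecidableRel G.Adj] {δ : ℕ}
    (hδ : ∀ v, δ ≤ G.degree v) (u v : (nbhdSubgraph G S).verts) :
    (nbhdSubgraph G S).coe.dist u v * (δ + 1) ≤ 4 * Fintype.card V := by
  classical
  by_cases huv : (nbhdSubgraph G S).coe.Reachable u v
  swap
  · simp [dist_eq_zero_of_not_reachable huv]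
  obtain ⟨p, hp⟩ := huv.exists_walk_length_eq_dist
  let e (i : ℕ) : ℕ := if (p.getVert (4 * i) : V) ∈ S then 4 * i else 4 * i + 1
  set m := (p.length + 3) / 4
  have he : ∀ i, 4 * i ≤ e i ∧ e i ≤ 4 * i + 1 := fun i => by
    simp only [e]; split_ifs <;> omega
  have heS : ∀ i < m, (p.getVert (e i) : V) ∈ S := fun i hi => by
    have := (p.adj_getVert_succ (i := 4 * i) (by omega)).2
    simp only [e]; split_ifs with h <;> tauto
  have hdisj : ((Finset.range m : Finset ℕ) : Set ℕ).PairwiseDisjoint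
      fun i => insert (p.getVert (e i) : V) (G.neighborFinset (p.getVert (e i))) := by
    intro i hi j hj hij
    simp only [Finset.coe_range, Set.mem_Iio] at hi hj
    wlog hlt : i < j generalizing i j
    · exact (this hij.symm hj hi (by omega)).symm
    rw [Function.onFun, Finset.disjoint_left]
    intro z hzi hzj
    simp only [Finset.mem_insert, mem_neighborFinset] at hzi hzj
    have hle := nbhdSubgraph_coe_dist_le_two (heS i hi) (heS j hj) hzi hzj
    have := he i
    have := he j
    rw [p.dist_getVert_eq_of_length_eq_dist hp (by omega) (by omega)] at hle
    omega
  have hcount := card_mul_succ_le_card_of_pairwiseDisjoint (fun i => (p.getVert (e i) : V))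
    (fun i _ => hδ _) hdisj
  rw [Finset.card_range] at hcount
  calc (nbhdSubgraph G S).coe.dist u v * (δ + 1) ≤ 4 * m * (δ + 1) := by
        gcongr; omega
    _ ≤ 4 * Fintype.card V := by rw [mul_assoc]; omega

end nbhdSubgraph

theorem stmt_12_general (k n : ℕ) (hk : 0 < k)
    (V : Type) [Fintype V] (hcard : Fintype.card V = n)
    (G : SimpleGraph V) (hG : IsKEdgeConnected G k)
    (S : Set V) (hind : (G.induce S).Connected) :
    (nbhdSubgraph G S).Connected ∧
      ∀ u v : (nbhdSubgraph G S).verts,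
        (((nbhdSubgraph G S).coe.dist u v : ℝ)) ≤ 12 * n / k := by
  classical
  refine ⟨nbhdSubgraph_connected hind, fun u v => ?_⟩
  have h := nbhdSubgraph_coe_dist_mul_le hG.le_degree u v
  rw [hcard] at h
  rw [le_div_iff₀ (by exact_mod_cast hk)]
  exact_mod_cast (by nlinarith : (nbhdSubgraph G S).coe.dist u v * k ≤ 12 * n)

theorem stmt_12 (k n : ℕ) (hk : 0 < k) (hn : 0 < n)
    (V : Type) [Fintype V] (hcard : Fintype.card V = n)
    (G : SimpleGraph V) (hG : IsKEdgeConnected G k)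
    (S : Set V) (hS : S.Nonempty) (hind : (G.induce S).Connected) :
    (nbhdSubgraph G S).Connected ∧
      ∀ u v : (nbhdSubgraph G S).verts,
        (((nbhdSubgraph G S).coe.dist u v : ℝ)) ≤ 12 * n / k :=
  stmt_12_general k n hk V hcard G hG S hind
end

section
/- Let m, k be integers with m ≥ k ≥ 2, and define the simple graph F_{m,k} as follows. Its vertices are: a root c; vertices u_1, …, u_m; and, for every j ∈ {1,…,m²} and i ∈ {1,…,m}, a set V_{j,i} = {x_{j,i,1}, …, x_{j,i,k}} of k vertices. Its edges are: the edge (u_i, c) for every i; all edges between pairs of distinct vertices within each V_{j,i} (so each V_{j,i} spans a k-clique); all edges between u_i and every vertex of V_{j,i}, for every i and j; and, for every j and every 1 ≤ i < m, the matching edges (x_{j,i,t}, x_{j,i+1,t}) for every t ∈ {1,…,k}. Then F_{m,k} is k-edge-connected and has diameter at most 4. -/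
open SimpleGraph

/-- The vertex set of the graph `F_{m,k}`: the root `c` (as `Sum.inl ()`),
the vertices `u_i` (as `Sum.inr (Sum.inl i)`), and the vertices `x_{j,i,t}` of the
cliques `V_{j,i}` (as `Sum.inr (Sum.inr (j, i, t))`). -/
abbrev FVert (m k : ℕ) : Type := Unit ⊕ (Fin m ⊕ (Fin (m ^ 2) × Fin m × Fin k))

/-- The generating relation for the edges of `F_{m,k}`:
`u_i — c`; `u_i — x_{j,i,t}` for all `j, t`; all edges within each clique `V_{j,i}`;
and the matching edges `x_{j,i,t} — x_{j,i+1,t}`. -/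
def FRel (m k : ℕ) : FVert m k → FVert m k → Prop
  | Sum.inr (Sum.inl _), Sum.inl _ => True
  | Sum.inr (Sum.inl i), Sum.inr (Sum.inr (_, i', _)) => i = i'
  | Sum.inr (Sum.inr (j, i, t)), Sum.inr (Sum.inr (j', i', t')) =>
      (j = j' ∧ i = i') ∨ (j = j' ∧ t = t' ∧ (i : ℕ) + 1 = (i' : ℕ))
  | _, _ => False

/-- The graph `F_{m,k}`. -/
def FGraph (m k : ℕ) : SimpleGraph (FVert m k) := SimpleGraph.fromRel (FRel m k)

/-!
Every vertex is within distance two of the root: `x_{j,i,t} — u_i — c`. Now delete a set `F`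
of fewer than `k ≤ m` edges. No edge meets two of the `m²` columns `{x_{j,i,t}}_{i,t}`, so `F`
misses some column `j`, and the matching path `x_{j,1,1}, …, x_{j,m,1}` still joins all the
`u_i`. One of the `m` edges `u_i c` survives. Finally each `x_{j,i,t}` stays joined to `u_i` by
one of the `k` edge-disjoint routes `x_{j,i,t} — x_{j,i,t'} — u_i`.
-/

open Function

theorem exists_disjoint_of_ncard_lt {ι α : Type*} [Finite ι] {S : ι → Set α}
    (hS : Pairwise (Disjoint on S)) {F : Set α} (hF : F.Finite) (hcard : F.ncard < Nat.card ι) :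
    ∃ i, Disjoint (S i) F := by
  by_contra! hmeet
  choose g hg using fun i => Set.not_disjoint_iff_nonempty_inter.mp (hmeet i)
  have hinj : Injective fun i => (⟨g i, (hg i).2⟩ : F) := by
    intro i i' hii'
    by_contra hne
    have hgg : g i = g i' := congrArg Subtype.val hii'
    exact Set.disjoint_left.mp (hS hne) (hg i).1 (hgg ▸ (hg i').1)
  have := hF.to_subtype
  have := Nat.card_le_card_of_injective _ hinj
  rw [Nat.card_coe_set_eq] at this
  omega

namespace SimpleGraph

variable {V : Type*} {G : SimpleGraph V} {F : Set (Sym2 V)}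

theorem reachable_deleteEdges_of_adj {v w : V} (h : G.Adj v w) (hF : s(v, w) ∉ F) :
    (G.deleteEdges F).Reachable v w :=
  (deleteEdges_adj.mpr ⟨h, hF⟩).reachable

theorem reachable_of_adj_of_succ_eq {n : ℕ} {f : Fin n → V}
    (hf : ∀ i i' : Fin n, (i : ℕ) + 1 = i' → G.Adj (f i) (f i')) (i i' : Fin n) :
    G.Reachable (f i) (f i') :=
  (pathGraph_preconnected n i i').map
    ⟨f, fun h => (pathGraph_adj.mp h).elim (hf _ _) fun h' => (hf _ _ h').symm⟩

theorem reachable_deleteEdges_of_isClique_of_adj {ι : Type*} [Finite ι] {K : ι → V}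
    (hK : Pairwise fun t t' => G.Adj (K t) (K t')) {u : V} (hu : ∀ t, G.Adj (K t) u)
    (hF : F.Finite) (hcard : F.ncard < Nat.card ι) (t : ι) :
    (G.deleteEdges F).Reachable (K t) u := by
  have hinj : Injective K := fun a b hab => by
    by_contra hne
    exact (hK hne).ne hab
  -- the edge sets of the routes `K t — K t' — u`, whose first step is void when `t' = t`
  have hdisj : Pairwise (Disjoint on fun t' => ({s(K t, K t'), s(K t', u)} : Set (Sym2 V))) := by
    intro a b hab
    have := hinj.ne hab
    have := (hu a).ne
    have := (hu b).ne
    simp only [onFun, Set.disjoint_insert_left, Set.disjoint_singleton_left,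
      Set.mem_insert_iff, Set.mem_singleton_iff, Sym2.eq_iff]
    grind
  obtain ⟨t', ht'⟩ := exists_disjoint_of_ncard_lt hdisj hF hcard
  have hKK : s(K t, K t') ∉ F := Set.disjoint_left.mp ht' (by simp)
  have hKu : s(K t', u) ∉ F := Set.disjoint_left.mp ht' (by simp)
  have hreach : (G.deleteEdges F).Reachable (K t) (K t') := by
    rcases eq_or_ne t t' with rfl | hne
    · rfl
    · exact reachable_deleteEdges_of_adj (hK hne) hKK
  exact hreach.trans (reachable_deleteEdges_of_adj (hu t') hKu)

end SimpleGraph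

namespace FGraph

variable {m k : ℕ}

def c : FVert m k := Sum.inl ()

def u (i : Fin m) : FVert m k := Sum.inr (Sum.inl i)

def x (j : Fin (m ^ 2)) (i : Fin m) (t : Fin k) : FVert m k := Sum.inr (Sum.inr (j, i, t))

theorem adj_u_c (i : Fin m) : (FGraph m k).Adj (u i) c := by
  rw [FGraph, fromRel_adj]
  exact ⟨by simp [u, c], Or.inl trivial⟩

theorem adj_x_u (j : Fin (m ^ 2)) (i : Fin m) (t : Fin k) : (FGraph m k).Adj (x j i t) (u i) := by
  rw [FGraph, fromRel_adj]
  exact ⟨by simp [u, x], Or.inr rfl⟩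

theorem adj_x_x_of_ne (j : Fin (m ^ 2)) (i : Fin m) {t t' : Fin k} (h : t ≠ t') :
    (FGraph m k).Adj (x j i t) (x j i t') := by
  rw [FGraph, fromRel_adj]
  exact ⟨by simp [x, h], Or.inl (Or.inl ⟨rfl, rfl⟩)⟩

theorem adj_x_x_of_succ_eq (j : Fin (m ^ 2)) {i i' : Fin m} (t : Fin k) (h : (i : ℕ) + 1 = i') :
    (FGraph m k).Adj (x j i t) (x j i' t) := by
  rw [FGraph, fromRel_adj]
  exact ⟨by simp [x]; omega, Or.inl (Or.inr ⟨rfl, rfl, h⟩)⟩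

theorem eq_of_adj_x_x {j j' : Fin (m ^ 2)} {i i' : Fin m} {t t' : Fin k}
    (h : (FGraph m k).Adj (x j i t) (x j' i' t')) : j = j' := by
  rw [FGraph, fromRel_adj] at h
  rcases h with ⟨-, h | h⟩ <;> simp [FRel, x] at h <;> tauto

theorem eq_of_x_mem_of_x_mem {e : Sym2 (FVert m k)} (he : e ∈ (FGraph m k).edgeSet)
    {j j' : Fin (m ^ 2)} {i i' : Fin m} {t t' : Fin k} (h : x j i t ∈ e) (h' : x j' i' t' ∈ e) :
    j = j' := by
  induction e using Sym2.ind with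
  | h a b =>
    rw [mem_edgeSet] at he
    rcases Sym2.mem_iff.mp h with rfl | rfl <;> rcases Sym2.mem_iff.mp h' with h' | h'
    · simp_all [x]
    · exact eq_of_adj_x_x (h' ▸ he)
    · exact eq_of_adj_x_x (h' ▸ he.symm)
    · simp_all [x]

theorem exists_column_forall_adj_deleteEdges {F : Set (Sym2 (FVert m k))} (hF : F.Finite)
    (hcard : F.ncard < m ^ 2) :
    ∃ j, ∀ i t w, (FGraph m k).Adj (x j i t) w →
      ((FGraph m k).deleteEdges F).Adj (x j i t) w := by
  have hS : Pairwise (Disjoint on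
      fun j => {e ∈ (FGraph m k).edgeSet | ∃ i t, x j i t ∈ e}) := by
    intro j j' hne
    refine Set.disjoint_left.mpr ?_
    rintro e ⟨he, i, t, hx⟩ ⟨-, i', t', hx'⟩
    exact hne (eq_of_x_mem_of_x_mem he hx hx')
  obtain ⟨j, hj⟩ := exists_disjoint_of_ncard_lt hS hF (by simpa using hcard)
  exact ⟨j, fun i t w hw =>
    deleteEdges_adj.mpr ⟨hw, Set.disjoint_left.mp hj ⟨hw, i, t, Sym2.mem_mk_left _ _⟩⟩⟩

theorem connected_deleteEdges {F : Set (Sym2 (FVert m k))} (hkm : k ≤ m) (hF : F.Finite)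
    (hcard : F.ncard < k) : ((FGraph m k).deleteEdges F).Connected := by
  set H := (FGraph m k).deleteEdges F
  have t₀ : Fin k := ⟨0, by omega⟩
  have hm : k ≤ m ^ 2 := hkm.trans (Nat.le_self_pow two_ne_zero m)
  obtain ⟨j, hj⟩ := exists_column_forall_adj_deleteEdges hF (hcard.trans_le hm)
  have hcolumn (i i' : Fin m) : H.Reachable (x j i t₀) (x j i' t₀) :=
    reachable_of_adj_of_succ_eq (fun _ _ hab => hj _ _ _ (adj_x_x_of_succ_eq j t₀ hab)) i i'
  have hu (i i' : Fin m) : H.Reachable (u i) (u i') :=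
    (hj _ _ _ (adj_x_u j i t₀)).reachable.symm.trans <|
      (hcolumn i i').trans (hj _ _ _ (adj_x_u j i' t₀)).reachable
  obtain ⟨i₀, hi₀⟩ := exists_disjoint_of_ncard_lt (S := fun i : Fin m => {s(u i, c)})
    (fun i i' hne => Set.disjoint_singleton.mpr (by simp [u, c, hne])) hF
    (by simpa using hcard.trans_le hkm)
  have huc (i : Fin m) : H.Reachable (u i) c :=
    (hu i i₀).trans <|
      reachable_deleteEdges_of_adj (adj_u_c i₀) (Set.disjoint_singleton_left.mp hi₀)
  have hxu (j : Fin (m ^ 2)) (i : Fin m) (t : Fin k) : H.Reachable (x j i t) (u i) :=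
    reachable_deleteEdges_of_isClique_of_adj (fun _ _ => adj_x_x_of_ne j i) (adj_x_u j i) hF
      (by simpa using hcard) t
  refine (connected_iff_exists_forall_reachable H).mpr ⟨c, fun v => ?_⟩
  rcases v with _ | i | ⟨j, i, t⟩
  · rfl
  · exact (huc i).symm
  · exact ((hxu j i t).trans (huc i)).symm

theorem isKEdgeConnected (hk : 1 ≤ k) (hkm : k ≤ m) : IsKEdgeConnected (FGraph m k) k := by
  have : Nontrivial (FVert m k) := ⟨c, u ⟨0, by omega⟩, by simp [c, u]⟩
  exact ⟨Finite.one_lt_card_iff_nontrivial.mpr this,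
    fun F hF _ hcard => connected_deleteEdges hkm hF hcard⟩

theorem exists_walk_c_length_le_two (v : FVert m k) :
    ∃ p : (FGraph m k).Walk v c, p.length ≤ 2 := by
  rcases v with ⟨⟨⟩⟩ | i | ⟨j, i, t⟩
  · exact ⟨.nil, Nat.zero_le 2⟩
  · show ∃ p : (FGraph m k).Walk (u i) c, p.length ≤ 2
    exact ⟨(adj_u_c i).toWalk, by simp⟩
  · show ∃ p : (FGraph m k).Walk (x j i t) c, p.length ≤ 2
    exact ⟨.cons (adj_x_u j i t) (adj_u_c i).toWalk, by simp⟩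

theorem dist_le_four (v w : FVert m k) : (FGraph m k).dist v w ≤ 4 := by
  obtain ⟨p, hp⟩ := exists_walk_c_length_le_two v
  obtain ⟨q, hq⟩ := exists_walk_c_length_le_two w
  calc (FGraph m k).dist v w ≤ (p.append q.reverse).length := dist_le _
    _ = p.length + q.length := by rw [Walk.length_append, Walk.length_reverse]
    _ ≤ 4 := by omega

end FGraph

theorem stmt_14 (m k : ℕ) (hk : 2 ≤ k) (hm : k ≤ m) :
    IsKEdgeConnected (FGraph m k) k ∧
      ∀ u v : FVert m k, (FGraph m k).dist u v ≤ 4 :=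
  ⟨FGraph.isKEdgeConnected (by omega) hm, FGraph.dist_le_four⟩
end

section
/- Let w ≥ 2 and D ≥ 1 be integers, and let T_{w,D} be the complete w-ary rooted tree of depth D, with vertices v_1, …, v_N indexed in post-order. Then for every index i such that v_i is a leaf of T_{w,D} and v_i is not the last leaf in the post-order, every edge of T_{w,D} with one endpoint in {v_1, …, v_i} and the other endpoint in {v_{i+1}, …, v_N} has at least one endpoint that is an ancestor of v_i; consequently, at most D·w edges of T_{w,D} join {v_1, …, v_i} to {v_{i+1}, …, v_N}. -/
open SimpleGraph

/-- Vertices of the complete `w`-ary rooted tree of depth `D`: a vertex is the list of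
child indices on the path from the root to it (the root is `[]`, and the `j`-th child of
`l` is `l ++ [j]`); leaves are exactly the lists of length `D`. -/
abbrev TVert (w D : ℕ) : Type := {l : List (Fin w) // l.length ≤ D}

/-- The complete `w`-ary rooted tree of depth `D`, as a simple graph: each vertex `l` of
depth less than `D` is joined to its children `l ++ [j]`. -/
def TreeGraph (w D : ℕ) : SimpleGraph (TVert w D) where
  Adj a b := (∃ j : Fin w, b.val = a.val ++ [j]) ∨ (∃ j : Fin w, a.val = b.val ++ [j])
  symm := ⟨fun a b h => h.symm⟩
  loopless := by
    constructor
    intro a h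
    rcases h with ⟨j, hj⟩ | ⟨j, hj⟩ <;>
    · have h2 := congrArg List.length hj
      simp at h2

/-- The (strict) post-order on the vertices of the `w`-ary tree: `a` comes strictly
before `b` iff `a` is a proper descendant of `b` (i.e. `b` is a proper prefix of `a`), or
`a` and `b` leave their common prefix with child indices `x < y` respectively. -/
def PostLT {w : ℕ} (a b : List (Fin w)) : Prop :=
  (b <+: a ∧ a ≠ b) ∨
    ∃ (p s t : List (Fin w)) (x y : Fin w), x < y ∧ a = p ++ x :: s ∧ b = p ++ y :: t

/-- `a` weakly precedes `b` in post-order. -/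
def PostLE {w : ℕ} {D : ℕ} (a b : TVert w D) : Prop :=
  PostLT a.val b.val ∨ a = b

/-- `a` is an ancestor of `b`: `a ≠ b` and `a` lies on the path from the root to `b`,
i.e. `a` is a proper prefix of `b`. -/
def IsAncestor {w D : ℕ} (a b : TVert w D) : Prop :=
  a.val <+: b.val ∧ a ≠ b

/-!
Let `v` be a leaf. Since descendants precede their ancestors in post-order, and a leaf has no
proper descendants, the child of a vertex preceding `v` precedes `v` as well. So a tree edge
crossing the cut after `v` joins a vertex `a` preceding `v` to its parent `b`, which does not;
comparing where `a` branches off the path to `v` shows that `b` lies on that path. Hence every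
crossing edge joins an ancestor of `v` (one of `D` vertices) to one of its `w` children.
-/

section

variable {w D : ℕ}

theorem PostLT.append {a v : List (Fin w)} (h : PostLT a v) (l : List (Fin w)) :
    PostLT (a ++ l) v := by
  rcases h with ⟨hva, hne⟩ | ⟨p, s, t, x, y, hxy, rfl, hv⟩
  · refine Or.inl ⟨hva.trans (List.prefix_append a l), fun heq => hne ?_⟩
    have hav : a <+: v := heq ▸ List.prefix_append a l
    exact hav.eq_of_length_le hva.length_le
  · exact Or.inr ⟨p, s ++ l, t, x, y, hxy, by simp, hv⟩

theorem PostLT.postLT_or_isPrefix_of_concat {b v : List (Fin w)} {j : Fin w}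
    (h : PostLT (b ++ [j]) v) : PostLT b v ∨ b <+: v := by
  rcases h with ⟨hvb, hne⟩ | ⟨p, s, t, x, y, hxy, hb, hv⟩
  · have hvb : v <+: b := (List.prefix_concat_iff.mp hvb).resolve_left (Ne.symm hne)
    by_cases hbv : b = v
    · exact Or.inr (hbv ▸ List.prefix_refl b)
    · exact Or.inl (Or.inl ⟨hvb, hbv⟩)
  · rcases List.eq_nil_or_concat s with rfl | ⟨s', k, rfl⟩
    · have hbp : b = p := List.append_inj_left' hb rfl
      exact Or.inr ⟨y :: t, by rw [hbp, hv]⟩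
    · have hbp : b = p ++ x :: s' :=
        List.append_inj_left' (t₁ := [j]) (t₂ := [k]) (hb.trans (by simp)) rfl
      exact Or.inl (Or.inr ⟨p, s', t, x, y, hxy, hbp, hv⟩)

theorem PostLE.append_singleton {a b v : TVert w D} {j : Fin w} (hv : v.val.length = D)
    (h : PostLE a v) (hb : b.val = a.val ++ [j]) : PostLE b v := by
  rcases h with h | rfl
  · exact Or.inl (hb ▸ h.append [j])
  · have := congrArg List.length hb
    simp only [List.length_append, List.length_singleton] at this
    exact absurd b.property (by omega)

theorem IsAncestor.of_child {a b v : TVert w D} {j : Fin w} (h : PostLE a v)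
    (ha : a.val = b.val ++ [j]) (hb : ¬ PostLE b v) : IsAncestor b v := by
  have : PostLT b.val v.val ∨ b.val <+: v.val := by
    rcases h with h | rfl
    · exact PostLT.postLT_or_isPrefix_of_concat (ha ▸ h)
    · exact Or.inr (ha ▸ List.prefix_append _ _)
  exact ⟨this.resolve_left (fun h => hb (Or.inl h)), fun h => hb (Or.inr h)⟩

theorem IsAncestor.length_lt {b v : TVert w D} (h : IsAncestor b v) : b.val.length < D := by
  have hlt : b.val.length < v.val.length := by
    refine lt_of_le_of_ne h.1.length_le fun hlen => h.2 ?_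
    exact Subtype.ext (h.1.eq_of_length hlen)
  exact lt_of_lt_of_le hlt v.property

theorem exists_child_isAncestor_of_crossing {a b v : TVert w D} (hv : v.val.length = D)
    (hadj : (TreeGraph w D).Adj a b) (ha : PostLE a v) (hb : ¬ PostLE b v) :
    ∃ j : Fin w, a.val = b.val ++ [j] ∧ IsAncestor b v := by
  rcases hadj with ⟨j, hba⟩ | ⟨j, hab⟩
  · exact absurd (ha.append_singleton hv hba) hb
  · exact ⟨j, hab, IsAncestor.of_child ha hab hb⟩

def pathChildEdge (v : TVert w D) (k : Fin D) (j : Fin w) : Sym2 (TVert w D) :=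
  s(⟨v.val.take k ++ [j], by
      simp only [List.length_append, List.length_take, List.length_singleton]; omega⟩,
    ⟨v.val.take k, (List.length_take_le _ _).trans k.isLt.le⟩)

theorem IsAncestor.edge_eq_pathChildEdge {a b v : TVert w D} {j : Fin w}
    (h : IsAncestor b v) (ha : a.val = b.val ++ [j]) :
    s(a, b) = pathChildEdge v ⟨b.val.length, h.length_lt⟩ j := by
  have hb : b.val = v.val.take b.val.length := List.prefix_iff_eq_take.mp h.1
  unfold pathChildEdge
  refine congrArg₂ (fun x y => s(x, y)) (Subtype.ext ?_) (Subtype.ext hb)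
  rw [ha]
  exact congrArg (· ++ [j]) hb

end

theorem stmt_15_general (w D : ℕ)
    (v : TVert w D) (hleaf : v.val.length = D) :
    (∀ a b : TVert w D, (TreeGraph w D).Adj a b →
        PostLE a v → ¬ PostLE b v → (IsAncestor a v ∨ IsAncestor b v)) ∧
      Nat.card {e : Sym2 (TVert w D) //
          e ∈ (TreeGraph w D).edgeSet ∧
          ∃ a b : TVert w D, e = s(a, b) ∧ PostLE a v ∧ ¬ PostLE b v} ≤ D * w := by
  refine ⟨fun a b hadj ha hb =>
    Or.inr (exists_child_isAncestor_of_crossing hleaf hadj ha hb).choose_spec.2, ?_⟩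
  have hsub : {e : Sym2 (TVert w D) | e ∈ (TreeGraph w D).edgeSet ∧
      ∃ a b : TVert w D, e = s(a, b) ∧ PostLE a v ∧ ¬ PostLE b v} ⊆
      Set.range (Function.uncurry (pathChildEdge v)) := by
    rintro _ ⟨hadj, a, b, rfl, ha, hb⟩
    obtain ⟨j, hab, hanc⟩ := exists_child_isAncestor_of_crossing hleaf hadj ha hb
    exact ⟨(_, j), (hanc.edge_eq_pathChildEdge hab).symm⟩
  calc _ ≤ Nat.card (Set.range (Function.uncurry (pathChildEdge v))) :=
        Nat.card_mono (Set.finite_range _) hsub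
    _ ≤ Nat.card (Fin D × Fin w) := Finite.card_range_le _
    _ = D * w := by simp

theorem stmt_15 (w D : ℕ) (hw : 2 ≤ w) (hD : 1 ≤ D)
    (v : TVert w D) (hleaf : v.val.length = D)
    (hnotlast : ∃ u : TVert w D, u.val.length = D ∧ PostLT v.val u.val) :
    (∀ a b : TVert w D, (TreeGraph w D).Adj a b →
        PostLE a v → ¬ PostLE b v → (IsAncestor a v ∨ IsAncestor b v)) ∧
      Nat.card {e : Sym2 (TVert w D) //
          e ∈ (TreeGraph w D).edgeSet ∧
          ∃ a b : TVert w D, e = s(a, b) ∧ PostLE a v ∧ ¬ PostLE b v} ≤ D * w :=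
  stmt_15_general w D v hleaf
end
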